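/- arXiv:2409.06869 — 4 statements merged into one kernel-verified Lean document; each statement's English description precedes it below -/
import Mathlib

section
/- Let p be a prime and α, k ≥ 1 integers with p^α ≥ 3, and let n be a positive integer not divisible by p. Then there exists an injective group homomorphism from (ℤ/p^αℤ)^k into the unit group (ℤ/nℤ)ˣ if and only if n has at least k distinct prime factors q with q ≡ 1 (mod p^α). -/
-- Lemma A
lemma modeq_one_iff {q m : ℕ} (hq : 1 ≤ q) (hm : 2 ≤ m) : q % m = 1 ↔ m ∣ q - 1 := by
  constructor
  · intro h
    have := Nat.div_add_mod q m
    exact ⟨q / m, by omega⟩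
  · rintro ⟨t, ht⟩
    have hq' : q = m * t + 1 := by omega
    have h2 := Nat.add_mul_mod_self_left 1 m t
    rw [hq', Nat.add_comm, h2, Nat.mod_eq_of_lt (by omega)]

-- exists order d in cyclic group
lemma exists_orderOf_eq_of_dvd {H : Type*} [Group H] [Finite H] [IsCyclic H]
    {d : ℕ} (hd : d ∣ Nat.card H) (hd0 : d ≠ 0) : ∃ v : H, orderOf v = d := by
  obtain ⟨g, hg⟩ := IsCyclic.exists_ofOrder_eq_natCard (α := H)
  refine ⟨g ^ (orderOf g / d), orderOf_pow_orderOf_div ?_ (by rw [hg]; exact hd)⟩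
  rw [hg]
  exact Nat.card_pos.ne'

-- lift order through surjective hom
lemma exists_orderOf_eq_of_surjective {G H : Type*} [Group G] [Group H] [Finite G]
    (π : G →* H) (hs : Function.Surjective π) (v : H) :
    ∃ w : G, orderOf w = orderOf v := by
  obtain ⟨u, rfl⟩ := hs v
  refine ⟨u ^ (orderOf u / orderOf (π u)), orderOf_pow_orderOf_div ?_ (orderOf_map_dvd π u)⟩
  exact (orderOf_pos u).ne'

-- kernel of unitsMap (ZMod q^e)ˣ → (ZMod q)ˣ has card q^(e-1)
lemma card_ker_unitsMap {q e : ℕ} (hq : q.Prime) (he : 1 ≤ e) :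
    Nat.card (MonoidHom.ker (ZMod.unitsMap (dvd_pow_self q (Nat.one_le_iff_ne_zero.mp he)))) =
      q ^ (e - 1) := by
  haveI : Fact q.Prime := ⟨hq⟩
  haveI : NeZero (q ^ e) := ⟨pow_ne_zero e hq.pos.ne'⟩
  set π := ZMod.unitsMap (dvd_pow_self q (Nat.one_le_iff_ne_zero.mp he))
  have hsurj : Function.Surjective π := ZMod.unitsMap_surjective _
  have h1 : Nat.card (ZMod (q ^ e))ˣ = Nat.card (ZMod q)ˣ * Nat.card (MonoidHom.ker π) := by
    rw [Subgroup.card_eq_card_quotient_mul_card_subgroup (MonoidHom.ker π),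
      Nat.card_congr (QuotientGroup.quotientKerEquivOfSurjective π hsurj).toEquiv]
  have h2 : Nat.card (ZMod (q ^ e))ˣ = q ^ (e - 1) * (q - 1) := by
    rw [Nat.card_eq_fintype_card, ZMod.card_units_eq_totient, Nat.totient_prime_pow hq he]
  have h3 : Nat.card (ZMod q)ˣ = q - 1 := by
    rw [Nat.card_eq_fintype_card, ZMod.card_units_eq_totient, Nat.totient_prime hq]
  rw [h2, h3, mul_comm (q ^ (e-1))] at h1
  exact (Nat.eq_of_mul_eq_mul_left (Nat.sub_pos_of_lt hq.one_lt) h1.symm)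

lemma eq_one_of_ker_of_pow {q e p j : ℕ} (hq : q.Prime) (he : 1 ≤ e) (hp : p.Prime)
    (hne : p ≠ q) {u : (ZMod (q ^ e))ˣ}
    (hker : ZMod.unitsMap (dvd_pow_self q (Nat.one_le_iff_ne_zero.mp he)) u = 1)
    (hu : u ^ p ^ j = 1) : u = 1 := by
  have hmem : u ∈ MonoidHom.ker (ZMod.unitsMap (dvd_pow_self q (Nat.one_le_iff_ne_zero.mp he))) := hker
  have hd1 : orderOf u ∣ q ^ (e - 1) := by
    rw [← card_ker_unitsMap hq he, ← Subgroup.orderOf_mk u hmem]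
    exact orderOf_dvd_natCard _
  have hd2 : orderOf u ∣ p ^ j := orderOf_dvd_of_pow_eq_one hu
  have hcop : Nat.Coprime (p ^ j) (q ^ (e - 1)) :=
    Nat.Coprime.pow _ _ ((Nat.coprime_primes hp hq).mpr hne)
  have : orderOf u = 1 := Nat.eq_one_of_dvd_coprimes hcop hd2 hd1
  exact orderOf_eq_one_iff.mp this

def Sset (G : Type*) [Group G] (a b : ℕ) : Set G := {u | u ^ a = 1 ∧ ∃ v, v ^ b = u}

section
variable {q e p α : ℕ}

lemma card_Sset_prime_pow (hp : p.Prime) (hα : 1 ≤ α) (hq : q.Prime) (he : 1 ≤ e)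
    (hne : p ≠ q) :
    Nat.card (Sset (ZMod (q ^ e))ˣ p (p ^ (α - 1))) =
      if p ^ α ∣ q - 1 then p else 1 := by
  haveI : Fact q.Prime := ⟨hq⟩
  haveI : NeZero (q ^ e) := ⟨pow_ne_zero e hq.pos.ne'⟩
  set π := ZMod.unitsMap (dvd_pow_self q (Nat.one_le_iff_ne_zero.mp he)) with hπ
  have hcardq : Nat.card (ZMod q)ˣ = q - 1 := by
    rw [Nat.card_eq_fintype_card, ZMod.card_units_eq_totient, Nat.totient_prime hq]
  have eq_one_of_ker : ∀ u : (ZMod (q ^ e))ˣ, π u = 1 → u ^ p = 1 → u = 1 := by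
    intro u h1 h2
    exact eq_one_of_ker_of_pow hq he hp hne h1 (j := 1) (by rwa [pow_one])
  by_cases hdvd : p ^ α ∣ q - 1
  · rw [if_pos hdvd]
    apply le_antisymm
    · -- upper bound: inject into {v : (ZMod q)ˣ // v ^ p = 1}
      have hinj : Function.Injective
          (fun u : Sset (ZMod (q ^ e))ˣ p (p ^ (α - 1)) =>
            (⟨π u.1, by rw [← map_pow, u.2.1, map_one]⟩ : {v : (ZMod q)ˣ // v ^ p = 1})) := by
        rintro ⟨u₁, hu₁⟩ ⟨u₂, hu₂⟩ h
        simp only [Subtype.mk.injEq] at h ⊢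
        have : π (u₁⁻¹ * u₂) = 1 := by rw [map_mul, map_inv, h, inv_mul_cancel]
        have h2 : (u₁⁻¹ * u₂) ^ p = 1 := by
          rw [mul_pow, inv_pow, hu₁.1, hu₂.1, inv_one, one_mul]
        exact inv_mul_eq_one.mp (eq_one_of_ker _ this h2)
      calc Nat.card (Sset (ZMod (q ^ e))ˣ p (p ^ (α - 1)))
          ≤ Nat.card {v : (ZMod q)ˣ // v ^ p = 1} := Nat.card_le_card_of_injective _ hinj
        _ ≤ p := by
            classical
            rw [Nat.card_eq_fintype_card, Fintype.card_subtype]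
            exact IsCyclic.card_pow_eq_one_le hp.pos
    · -- lower bound
      obtain ⟨v, hv⟩ : ∃ v : (ZMod q)ˣ, orderOf v = p ^ α := by
        apply exists_orderOf_eq_of_dvd (by rw [hcardq]; exact hdvd)
        exact (pow_pos hp.pos α).ne'
      obtain ⟨w, hw⟩ := exists_orderOf_eq_of_surjective π (ZMod.unitsMap_surjective _) v
      rw [hv] at hw
      have hinj : Function.Injective (fun j : Fin p =>
          (⟨w ^ (p ^ (α - 1) * (j : ℕ)), ⟨by
            rw [← pow_mul]
            have : p ^ (α - 1) * (j : ℕ) * p = p ^ α * (j : ℕ) := by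
              rw [mul_comm _ p, ← mul_assoc, ← pow_succ']
              congr 2
              omega
            rw [this, pow_mul, ← hw, pow_orderOf_eq_one, one_pow], ⟨w ^ (j : ℕ), by
              rw [← pow_mul, mul_comm]⟩⟩⟩ : Sset (ZMod (q ^ e))ˣ p (p ^ (α - 1)))) := by
        intro j₁ j₂ h
        have h : w ^ (p ^ (α - 1) * (j₁ : ℕ)) = w ^ (p ^ (α - 1) * (j₂ : ℕ)) :=
          congrArg Subtype.val h
        rw [pow_eq_pow_iff_modEq, hw] at h
        have h1 : p ^ (α - 1) * (j₁ : ℕ) < p ^ α := by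
          have : p ^ α = p ^ (α - 1) * p := by rw [← pow_succ]; congr 1; omega
          rw [this]
          exact mul_lt_mul_of_pos_left j₁.2 (pow_pos hp.pos _)
        have h2 : p ^ (α - 1) * (j₂ : ℕ) < p ^ α := by
          have : p ^ α = p ^ (α - 1) * p := by rw [← pow_succ]; congr 1; omega
          rw [this]
          exact mul_lt_mul_of_pos_left j₂.2 (pow_pos hp.pos _)
        have := (Nat.ModEq.eq_of_lt_of_lt h h1 h2)
        exact Fin.ext (Nat.eq_of_mul_eq_mul_left (pow_pos hp.pos _) this)
      have := Nat.card_le_card_of_injective _ hinj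
      simpa using this
  · rw [if_neg hdvd]
    have hSet : Sset (ZMod (q ^ e))ˣ p (p ^ (α - 1)) = {1} := by
      ext u
      simp only [Sset, Set.mem_setOf_eq, Set.mem_singleton_iff]
      constructor
      · rintro ⟨hup, v, rfl⟩
        have hv : v ^ p ^ α = 1 := by
          rw [← pow_mul] at hup
          have hpp : p ^ (α - 1) * p = p ^ α := by rw [← pow_succ]; congr 1; omega
          rwa [hpp] at hup
        have hd1 : orderOf (π v) ∣ p ^ α := by
          apply orderOf_dvd_of_pow_eq_one
          rw [← map_pow, hv, map_one]
        have hd2 : orderOf (π v) ∣ q - 1 := hcardq ▸ orderOf_dvd_natCard _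
        have hg : orderOf (π v) ∣ Nat.gcd (p ^ α) (q - 1) := Nat.dvd_gcd hd1 hd2
        obtain ⟨i, hi, hgeq⟩ := (Nat.dvd_prime_pow hp).mp (Nat.gcd_dvd_left (p ^ α) (q - 1))
        have hilt : i ≤ α - 1 := by
          rcases Nat.lt_or_ge i α with h' | h'
          · omega
          · exfalso
            apply hdvd
            have : i = α := by omega
            rw [this] at hgeq
            exact hgeq ▸ Nat.gcd_dvd_right _ _
        have hord : orderOf (π v) ∣ p ^ (α - 1) :=
          (hg.trans (hgeq ▸ pow_dvd_pow p hilt))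
        have hπu : π (v ^ p ^ (α - 1)) = 1 := by
          rw [map_pow]
          exact orderOf_dvd_iff_pow_eq_one.mp hord
        exact eq_one_of_ker _ hπu hup
      · rintro rfl
        exact ⟨one_pow _, 1, one_pow _⟩
    rw [hSet]
    simp [Nat.card_coe_set_eq]

end
lemma Sset_prod {G H : Type*} [Group G] [Group H] (a b : ℕ) :
    Sset (G × H) a b = (Sset G a b) ×ˢ (Sset H a b) := by
  ext u
  simp only [Sset, Set.mem_setOf_eq, Set.mem_prod, Prod.pow_fst, Prod.pow_snd]
  constructor
  · rintro ⟨h1, v, rfl⟩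
    exact ⟨⟨congrArg Prod.fst h1, v.1, rfl⟩, ⟨congrArg Prod.snd h1, v.2, rfl⟩⟩
  · rintro ⟨⟨h1, v1, hv1⟩, ⟨h2, v2, hv2⟩⟩
    refine ⟨Prod.ext h1 h2, (v1, v2), Prod.ext ?_ ?_⟩ <;> simp [hv1, hv2]

lemma card_Sset_congr {G H : Type*} [Group G] [Group H] (e : G ≃* H) (a b : ℕ) :
    Nat.card (Sset G a b) = Nat.card (Sset H a b) := by
  apply Nat.card_congr
  refine e.toEquiv.subtypeEquiv fun u => ?_
  show u ∈ Sset G a b ↔ e u ∈ Sset H a b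
  simp only [Sset, Set.mem_setOf_eq]
  constructor
  · rintro ⟨h1, v, rfl⟩
    exact ⟨by rw [← map_pow, h1, map_one], e v, by rw [← map_pow]⟩
  · rintro ⟨h1, v, hv⟩
    refine ⟨e.injective (by rw [map_pow, h1, map_one]), e.symm v, e.injective ?_⟩
    rw [map_pow, e.apply_symm_apply, hv]

lemma card_Sset_mul {a b : ℕ} (h : a.Coprime b) (x y : ℕ) :
    Nat.card (Sset (ZMod (a * b))ˣ x y) =
      Nat.card (Sset (ZMod a)ˣ x y) * Nat.card (Sset (ZMod b)ˣ x y) := by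
  have Φ : (ZMod (a * b))ˣ ≃* (ZMod a)ˣ × (ZMod b)ˣ :=
    (Units.mapEquiv (ZMod.chineseRemainder h).toMulEquiv).trans MulEquiv.prodUnits
  rw [card_Sset_congr Φ x y, Sset_prod]
  rw [Nat.card_congr (Equiv.Set.prod _ _), Nat.card_prod]

lemma card_Sset_zmod {p α : ℕ} (hp : p.Prime) (hα : 1 ≤ α) :
    ∀ n : ℕ, 0 < n → ¬ p ∣ n →
      Nat.card (Sset (ZMod n)ˣ p (p ^ (α - 1))) =
        p ^ (n.primeFactors.filter (fun q => p ^ α ∣ q - 1)).card := by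
  intro n
  induction n using Nat.recOnPosPrimePosCoprime with
  | prime_pow q e hq he =>
    intro _ hpn
    have hne : p ≠ q := fun h => hpn (h ▸ dvd_pow_self p he.ne')
    rw [card_Sset_prime_pow hp hα hq he hne,
      Nat.primeFactors_prime_pow he.ne' hq, Finset.filter_singleton]
    by_cases hd : p ^ α ∣ q - 1
    · rw [if_pos hd, if_pos hd, Finset.card_singleton, pow_one]
    · rw [if_neg hd, if_neg hd, Finset.card_empty, pow_zero]
  | zero => intro h; exact absurd h (lt_irrefl 0)
  | one =>
    intro _ _
    simp only [Nat.primeFactors_one, Finset.filter_empty, Finset.card_empty, pow_zero]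
    rw [Nat.card_eq_one_iff_unique]
    constructor
    · infer_instance
    · exact ⟨⟨1, one_pow _, 1, one_pow _⟩⟩
  | coprime a b ha hb hab iha ihb =>
    intro hpos hpn
    rw [card_Sset_mul hab, iha (by omega) (fun h => hpn (h.mul_right b)),
      ihb (by omega) (fun h => hpn (h.mul_left a)), ← pow_add,
      hab.primeFactors_mul, Finset.filter_union,
      Finset.card_union_of_disjoint
        (Finset.disjoint_filter_filter hab.disjoint_primeFactors)]
section
variable {a b : ℕ}

lemma chineseRemainder_apply (h : a.Coprime b) (x : ZMod (a * b)) :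
    (ZMod.chineseRemainder h) x = (ZMod.cast x : ZMod a × ZMod b) := rfl

lemma unitsMap_fst (h : a.Coprime b) (u : (ZMod (a * b))ˣ) :
    ZMod.unitsMap (dvd_mul_right a b) u =
      (((Units.mapEquiv (ZMod.chineseRemainder h).toMulEquiv).trans MulEquiv.prodUnits) u).1 := by
  ext
  simp only [ZMod.unitsMap_def, Units.coe_map, MulEquiv.trans_apply, MulEquiv.prodUnits,
    MonoidHom.prod_apply, MonoidHom.coe_fst, Units.coe_mapEquiv, MulEquiv.coe_mk,
    Equiv.coe_fn_mk, ZMod.castHom_apply, RingEquiv.coe_toMulEquiv, chineseRemainder_apply]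
  exact (Prod.fst_zmod_cast _).symm

lemma unitsMap_snd (h : a.Coprime b) (u : (ZMod (a * b))ˣ) :
    ZMod.unitsMap (dvd_mul_left b a) u =
      (((Units.mapEquiv (ZMod.chineseRemainder h).toMulEquiv).trans MulEquiv.prodUnits) u).2 := by
  ext
  simp only [ZMod.unitsMap_def, Units.coe_map, MulEquiv.trans_apply, MulEquiv.prodUnits,
    MonoidHom.prod_apply, MonoidHom.coe_snd, Units.coe_mapEquiv, MulEquiv.coe_mk,
    Equiv.coe_fn_mk, ZMod.castHom_apply, RingEquiv.coe_toMulEquiv, chineseRemainder_apply]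
  exact (Prod.snd_zmod_cast _).symm

end

-- order is preserved when reducing mod q, for order coprime to q
lemma orderOf_unitsMap_eq {q e d : ℕ} (hq : q.Prime) (he : 1 ≤ e)
    {w : (ZMod (q ^ e))ˣ} (hw : orderOf w = d) (hcop : Nat.Coprime d q) :
    orderOf (ZMod.unitsMap (dvd_pow_self q (Nat.one_le_iff_ne_zero.mp he)) w) = d := by
  haveI : NeZero (q ^ e) := ⟨pow_ne_zero e hq.pos.ne'⟩
  set π := ZMod.unitsMap (dvd_pow_self q (Nat.one_le_iff_ne_zero.mp he)) with hπ
  set s := orderOf (π w) with hs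
  have hsd : s ∣ d := hw ▸ orderOf_map_dvd π w
  have hd0 : d ≠ 0 := by
    rintro rfl
    have := hw
    simp only [orderOf_eq_zero_iff] at this
    exact this (isOfFinOrder_of_finite w)
  have hs0 : s ≠ 0 := (orderOf_pos _).ne'
  have hker : π (w ^ s) = 1 := by
    rw [map_pow, pow_orderOf_eq_one]
  have hpow : (w ^ s) ^ d = 1 := by
    rw [← pow_mul, mul_comm, pow_mul, ← hw, pow_orderOf_eq_one, one_pow]
  have horder : orderOf (w ^ s) = d / s := by
    rw [orderOf_pow, hw, Nat.gcd_eq_right hsd]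
  have hmem : w ^ s ∈ MonoidHom.ker π := hker
  have hdvd1 : orderOf (w ^ s) ∣ q ^ (e - 1) := by
    rw [← card_ker_unitsMap hq he, ← Subgroup.orderOf_mk _ hmem]
    exact orderOf_dvd_natCard _
  have hdvd2 : Nat.Coprime (d / s) (q ^ (e - 1)) :=
    ((Nat.Coprime.coprime_dvd_left (Nat.div_dvd_of_dvd hsd) hcop).pow_right _)
  have h1 : d / s = 1 := Nat.eq_one_of_dvd_coprimes hdvd2 (dvd_refl _) (horder ▸ hdvd1)
  have : s * (d / s) = d := Nat.mul_div_cancel' hsd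
  rw [h1, mul_one] at this
  exact hs ▸ this

lemma exists_unit {n q d : ℕ} (hn : n ≠ 0) (hq : q.Prime) (hqn : q ∣ n)
    (hd0 : d ≠ 0) (hdq : Nat.Coprime d q) (hdd : d ∣ q - 1) :
    ∃ u : (ZMod n)ˣ, u ^ d = 1 ∧ orderOf (ZMod.unitsMap hqn u) = d ∧
      ∀ r : ℕ, ∀ hr : r ∣ n, Nat.Coprime r q → ZMod.unitsMap hr u = 1 := by
  haveI : Fact q.Prime := ⟨hq⟩
  obtain ⟨e, m, he, hcop, heq⟩ : ∃ e m, 1 ≤ e ∧ Nat.Coprime (q ^ e) m ∧ q ^ e * m = n := by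
    refine ⟨n.factorization q, n / q ^ n.factorization q, ?_, ?_, Nat.ordProj_mul_ordCompl_eq_self n q⟩
    · exact (Nat.Prime.factorization_pos_of_dvd hq hn hqn)
    · exact (Nat.coprime_ordCompl hq hn).pow_left _
  subst heq
  -- first get w of order d in (ZMod (q^e))ˣ
  obtain ⟨v, hv⟩ : ∃ v : (ZMod q)ˣ, orderOf v = d := by
    apply exists_orderOf_eq_of_dvd _ hd0
    rw [Nat.card_eq_fintype_card, ZMod.card_units_eq_totient, Nat.totient_prime hq]
    exact hdd
  haveI : NeZero (q ^ e) := ⟨pow_ne_zero e hq.pos.ne'⟩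
  obtain ⟨w, hw⟩ := exists_orderOf_eq_of_surjective
    (ZMod.unitsMap (dvd_pow_self q (Nat.one_le_iff_ne_zero.mp he)))
    (ZMod.unitsMap_surjective _) v
  rw [hv] at hw
  set Φ := (Units.mapEquiv (ZMod.chineseRemainder hcop).toMulEquiv).trans MulEquiv.prodUnits with hΦ
  refine ⟨Φ.symm (w, 1), ?_, ?_, ?_⟩
  · have : (w, (1 : (ZMod m)ˣ)) ^ d = 1 := by
      rw [Prod.pow_mk, ← hw, pow_orderOf_eq_one, one_pow]
      rfl
    rw [← map_pow, this, map_one]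
  · have h1 : ZMod.unitsMap (dvd_mul_right (q ^ e) m) (Φ.symm (w, 1)) = w := by
      rw [unitsMap_fst hcop, Φ.apply_symm_apply]
    have h2 : ZMod.unitsMap hqn (Φ.symm (w, 1)) =
        ZMod.unitsMap (dvd_pow_self q (Nat.one_le_iff_ne_zero.mp he))
          (ZMod.unitsMap (dvd_mul_right (q ^ e) m) (Φ.symm (w, 1))) := by
      rw [← MonoidHom.comp_apply, ZMod.unitsMap_comp]
    rw [h2, h1]
    exact orderOf_unitsMap_eq hq he hw hdq
  · intro r hr hrq
    have hrm : r ∣ m := (Nat.Coprime.dvd_of_dvd_mul_left (hrq.pow_right e) hr)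
    have h1 : ZMod.unitsMap (dvd_mul_left m (q ^ e)) (Φ.symm (w, 1)) = 1 := by
      rw [unitsMap_snd hcop, Φ.apply_symm_apply]
    have h2 : ZMod.unitsMap hr (Φ.symm (w, 1)) =
        ZMod.unitsMap hrm (ZMod.unitsMap (dvd_mul_left m (q ^ e)) (Φ.symm (w, 1))) := by
      rw [← MonoidHom.comp_apply, ZMod.unitsMap_comp]
    rw [h2, h1, map_one]
theorem stmt_4 (p α k : ℕ) (hp : p.Prime) (hα : 1 ≤ α) (hk : 1 ≤ k) (h3 : 3 ≤ p ^ α)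
    (n : ℕ) (hn : 0 < n) (hpn : ¬ p ∣ n) :
    (∃ f : (Fin k → ZMod (p ^ α)) →+ Additive ((ZMod n)ˣ), Function.Injective f) ↔
      k ≤ (n.primeFactors.filter (fun q => q % p ^ α = 1)).card := by
  haveI : NeZero p := ⟨hp.pos.ne'⟩
  haveI : NeZero (p ^ α) := ⟨(pow_pos hp.pos α).ne'⟩
  haveI : NeZero n := ⟨hn.ne'⟩
  have hfilter : (n.primeFactors.filter (fun q => q % p ^ α = 1)).card
      = (n.primeFactors.filter (fun q => p ^ α ∣ q - 1)).card := by
    congr 1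
    apply Finset.filter_congr
    intro q hq
    have hq1 : 1 ≤ q := (Nat.prime_of_mem_primeFactors hq).pos
    simpa using modeq_one_iff hq1 (by omega)
  rw [hfilter]
  have hppow : p * p ^ (α - 1) = p ^ α := by
    rw [← pow_succ']
    congr 1
    omega
  constructor
  · rintro ⟨f, hf⟩
    have hcard := card_Sset_zmod hp hα n hn hpn
    set z : (Fin k → ZMod p) → (Fin k → ZMod (p ^ α)) :=
      fun x i => ((p ^ (α - 1) : ℕ) : ZMod (p ^ α)) * ((x i).val : ZMod (p ^ α)) with hzdef
    have hz0 : ∀ x, p • z x = 0 := by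
      intro x
      funext i
      show p • (((p ^ (α - 1) : ℕ) : ZMod (p ^ α)) * ((x i).val : ZMod (p ^ α))) = 0
      rw [nsmul_eq_mul, ← mul_assoc, ← Nat.cast_mul, hppow, ZMod.natCast_self, zero_mul]
    have hzsmul : ∀ x, z x = p ^ (α - 1) • (fun i => (((x i).val : ℕ) : ZMod (p ^ α))) := by
      intro x
      funext i
      show ((p ^ (α - 1) : ℕ) : ZMod (p ^ α)) * ((x i).val : ZMod (p ^ α))
        = p ^ (α - 1) • (((x i).val : ℕ) : ZMod (p ^ α))
      rw [nsmul_eq_mul]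
    have hmem : ∀ x : Fin k → ZMod p,
        Additive.toMul (f (z x)) ∈ Sset (ZMod n)ˣ p (p ^ (α - 1)) := by
      intro x
      constructor
      · rw [← toMul_nsmul, ← map_nsmul, hz0, map_zero, toMul_zero]
      · refine ⟨Additive.toMul (f (fun i => (((x i).val : ℕ) : ZMod (p ^ α)))), ?_⟩
        rw [← toMul_nsmul, ← map_nsmul, ← hzsmul]
    set g : (Fin k → ZMod p) → Sset (ZMod n)ˣ p (p ^ (α - 1)) :=
      fun x => ⟨Additive.toMul (f (z x)), hmem x⟩ with hgdef
    have hginj : Function.Injective g := by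
      intro x₁ x₂ h
      have h1 : z x₁ = z x₂ := hf (Additive.toMul.injective (congrArg Subtype.val h))
      funext i
      have h2 := congrFun h1 i
      simp only [hzdef] at h2
      rw [← Nat.cast_mul, ← Nat.cast_mul, ZMod.natCast_eq_natCast_iff] at h2
      have h3 : p ^ α = p ^ (α - 1) * p := by rw [← hppow]; ring
      unfold Nat.ModEq at h2
      rw [h3, Nat.mul_mod_mul_left, Nat.mul_mod_mul_left] at h2
      have h4 := Nat.eq_of_mul_eq_mul_left (pow_pos hp.pos (α - 1)) h2
      rw [Nat.mod_eq_of_lt (ZMod.val_lt _), Nat.mod_eq_of_lt (ZMod.val_lt _)] at h4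
      exact ZMod.val_injective _ h4
    have hle := Nat.card_le_card_of_injective g hginj
    have hdom : Nat.card (Fin k → ZMod p) = p ^ k := by
      simp [Nat.card_eq_fintype_card, ZMod.card]
    rw [hdom, hcard] at hle
    exact (Nat.pow_le_pow_iff_right hp.one_lt).mp hle
  · intro hc
    obtain ⟨t, hts, htc⟩ := Finset.exists_subset_card_eq hc
    set Q := t.orderIsoOfFin htc with hQ
    have hmem : ∀ j : Fin k, (Q j : ℕ) ∈ n.primeFactors.filter (fun q => p ^ α ∣ q - 1) :=
      fun j => hts (Q j).2
    have hqprime : ∀ j, Nat.Prime (Q j : ℕ) :=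
      fun j => Nat.prime_of_mem_primeFactors (Finset.mem_filter.mp (hmem j)).1
    have hqdvd : ∀ j, (Q j : ℕ) ∣ n :=
      fun j => Nat.dvd_of_mem_primeFactors (Finset.mem_filter.mp (hmem j)).1
    have hqmod : ∀ j, p ^ α ∣ (Q j : ℕ) - 1 := fun j => (Finset.mem_filter.mp (hmem j)).2
    have hQinj : Function.Injective (fun j => (Q j : ℕ)) :=
      fun j₁ j₂ h => Q.injective (Subtype.ext h)
    have hpq : ∀ j, p ≠ (Q j : ℕ) := fun j h => hpn (h ▸ hqdvd j)
    have hpcop : ∀ j, Nat.Coprime (p ^ α) (Q j : ℕ) :=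
      fun j => Nat.Coprime.pow_left _ ((Nat.coprime_primes hp (hqprime j)).mpr (hpq j))
    choose u hu1 hu2 hu3 using fun j =>
      exists_unit hn.ne' (hqprime j) (hqdvd j) (pow_pos hp.pos α).ne' (hpcop j) (hqmod j)
    have hsmul : ∀ j, (zmultiplesHom (Additive (ZMod n)ˣ) (Additive.ofMul (u j)))
        ((p ^ α : ℕ) : ℤ) = 0 := by
      intro j
      rw [zmultiplesHom_apply, ← ofMul_zpow, zpow_natCast, hu1 j, ofMul_one]
    set L : Fin k → (ZMod (p ^ α) →+ Additive (ZMod n)ˣ) :=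
      fun j => ZMod.lift (p ^ α) ⟨zmultiplesHom _ (Additive.ofMul (u j)), hsmul j⟩ with hL
    have hLval : ∀ j (y : ZMod (p ^ α)), L j y = ((y.val : ℤ)) • Additive.ofMul (u j) := by
      intro j y
      have hy : ((((y.val : ℕ) : ℤ)) : ZMod (p ^ α)) = y := by
        rw [Int.cast_natCast, ZMod.natCast_zmod_val]
      conv_lhs => rw [← hy]
      rw [hL, ZMod.lift_coe]
      rfl
    set F : (Fin k → ZMod (p ^ α)) →+ Additive ((ZMod n)ˣ) :=
      ∑ j : Fin k, (L j).comp (Pi.evalAddMonoidHom (fun _ : Fin k => ZMod (p ^ α)) j) with hF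
    refine ⟨F, ?_⟩
    rw [injective_iff_map_eq_zero]
    intro x hx
    funext j
    show x j = 0
    set ρ := ZMod.unitsMap (hqdvd j) with hρ
    set R := MonoidHom.toAdditive ρ with hR
    have hRx : R (F x) = 0 := by rw [hx, map_zero]
    have hFx : F x = ∑ i : Fin k, L i (x i) := by
      rw [hF, AddMonoidHom.finset_sum_apply]
      rfl
    rw [hFx, map_sum] at hRx
    have hterm : ∀ i : Fin k, i ≠ j → R (L i (x i)) = 0 := by
      intro i hij
      rw [hLval, map_zsmul]
      have h1 : ρ (u i) = 1 := by
        apply hu3 i (Q j : ℕ) (hqdvd j)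
        exact (Nat.coprime_primes (hqprime j) (hqprime i)).mpr
          (fun h => hij (hQinj h).symm)
      show ((x i).val : ℤ) • Additive.ofMul (ρ (u i)) = 0
      rw [h1, ofMul_one, smul_zero]
    rw [Finset.sum_eq_single j (fun i _ hij => hterm i hij)
      (fun h => absurd (Finset.mem_univ j) h)] at hRx
    rw [hLval, map_zsmul] at hRx
    have hRu : R (Additive.ofMul (u j)) = Additive.ofMul (ρ (u j)) := rfl
    rw [hRu, ← ofMul_zpow, zpow_natCast] at hRx
    have hpow : ρ (u j) ^ (x j).val = 1 := by
      have := congrArg Additive.toMul hRx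
      simpa using this
    have hdvd : orderOf (ρ (u j)) ∣ (x j).val := orderOf_dvd_of_pow_eq_one hpow
    rw [hu2 j] at hdvd
    have hv0 := Nat.eq_zero_of_dvd_of_lt hdvd (ZMod.val_lt _)
    exact (ZMod.val_eq_zero _).mp hv0
end

section
/- Let k ≥ 0 and γ > 0 be real numbers. There exists a constant C > 0 (depending only on k and γ) such that for all real numbers n ≥ 2 and x ≥ n², |(log₂(x/n))^k/(log(x/n))^γ − (log₂x)^k/(log x)^γ| ≤ C·(log n/log x)·(log₂x)^k/(log x)^γ. -/
/-- `log₂ x := log log (max x 3)`. -/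
noncomputable def loglog (x : ℝ) : ℝ := Real.log (Real.log (max x 3))

open Real

lemma aux_pow (p : ℝ) (t : ℝ) (h1 : 1 ≤ t) (h2 : t ≤ 2) :
    t ^ p - 1 ≤ ((⌈p⌉₊ : ℝ) * 2 ^ ⌈p⌉₊ + 1) * (t - 1) := by
  set m := ⌈p⌉₊ with hm
  have ht0 : (0:ℝ) < t := lt_of_lt_of_le one_pos h1
  have h1' : t ^ p ≤ t ^ (m : ℝ) :=
    Real.rpow_le_rpow_of_exponent_le h1 (Nat.le_ceil p)
  rw [Real.rpow_natCast] at h1'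
  have hgeom : t ^ m - 1 = (∑ i ∈ Finset.range m, t ^ i) * (t - 1) := (geom_sum_mul t m).symm
  have hsum : (∑ i ∈ Finset.range m, t ^ i) ≤ (m : ℝ) * 2 ^ m := by
    calc (∑ i ∈ Finset.range m, t ^ i) ≤ ∑ i ∈ Finset.range m, (2:ℝ) ^ m := by
          apply Finset.sum_le_sum
          intro i hi
          calc t ^ i ≤ (2:ℝ) ^ i := pow_le_pow_left₀ (by linarith) h2 i
            _ ≤ (2:ℝ) ^ m := pow_le_pow_right₀ one_le_two (Finset.mem_range.mp hi).le
      _ = (m : ℝ) * 2 ^ m := by simp [mul_comm]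
  nlinarith [hgeom, mul_le_mul_of_nonneg_right hsum (by linarith : (0:ℝ) ≤ t - 1)]

set_option maxHeartbeats 1000000 in
theorem stmt_12 (k γ : ℝ) (hk : 0 ≤ k) (hγ : 0 < γ) :
    ∃ C : ℝ, 0 < C ∧ ∀ n x : ℝ, 2 ≤ n → n ^ 2 ≤ x →
      |loglog (x / n) ^ k / Real.log (x / n) ^ γ - loglog x ^ k / Real.log x ^ γ| ≤
        C * (Real.log n / Real.log x) * loglog x ^ k / Real.log x ^ γ := by
  set Dγ : ℝ := (⌈γ⌉₊ : ℝ) * 2 ^ ⌈γ⌉₊ + 1 with hDγdef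
  set Dk : ℝ := (⌈k⌉₊ : ℝ) * 2 ^ ⌈k⌉₊ + 1 with hDkdef
  have hDγ : 0 < Dγ := by positivity
  have hDk : 0 < Dk := by positivity
  have he : Real.exp 1 < 2.7182818286 := Real.exp_one_lt_d9
  have hlog3 : 1 < Real.log 3 := by
    rw [show (1:ℝ) = Real.log (Real.exp 1) from (Real.log_exp 1).symm]
    exact Real.log_lt_log (Real.exp_pos 1) (by linarith)
  have hlog4 : 1 < Real.log 4 := by
    rw [show (1:ℝ) = Real.log (Real.exp 1) from (Real.log_exp 1).symm]
    exact Real.log_lt_log (Real.exp_pos 1) (by linarith)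
  set v₀ : ℝ := Real.log (Real.log 4) with hv₀def
  have hv₀ : 0 < v₀ := Real.log_pos hlog4
  set E : ℝ := 2 + 2 * Dk with hEdef
  have hE : 0 < E := by positivity
  refine ⟨2 * Dγ + E * (2 / v₀), by positivity, ?_⟩
  intro n x hn hx
  have hn0 : (0:ℝ) < n := by linarith
  have hx4 : (4:ℝ) ≤ x := by nlinarith [sq_nonneg (n - 2)]
  have hx0 : (0:ℝ) < x := by linarith
  have hxn : n ≤ x / n := (le_div_iff₀ hn0).mpr (by nlinarith)
  have hxn2 : (2:ℝ) ≤ x / n := le_trans hn hxn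
  have hxnx : x / n ≤ x := by
    rw [div_le_iff₀ hn0]
    exact le_mul_of_one_le_right hx0.le (by linarith)
  set ℓ : ℝ := Real.log n with hℓdef
  set L : ℝ := Real.log x with hLdef
  have hℓ : 0 < ℓ := Real.log_pos (by linarith)
  have hL4 : Real.log 4 ≤ L := Real.log_le_log (by norm_num) hx4
  have hL1 : 1 < L := lt_of_lt_of_le hlog4 hL4
  have hL2ℓ : 2 * ℓ ≤ L := by
    have : Real.log (n ^ 2) ≤ L := Real.log_le_log (by positivity) hx
    rwa [Real.log_pow, Nat.cast_ofNat, two_mul, ← two_mul] at this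
  have hLl : Real.log (x / n) = L - ℓ := Real.log_div (by linarith) (by linarith)
  have hLl2 : L / 2 ≤ L - ℓ := by linarith
  have hLlpos : 0 < L - ℓ := by linarith
  set M : ℝ := max (x / n) 3 with hMdef
  have hM3 : (3:ℝ) ≤ M := le_max_right _ _
  have hMx : M ≤ x := max_le (by linarith) (by linarith)
  set L' : ℝ := Real.log M with hL'def
  have hL'3 : Real.log 3 ≤ L' := Real.log_le_log (by norm_num) hM3
  have hL'1 : 1 < L' := lt_of_lt_of_le hlog3 hL'3
  have hL'L : L' ≤ L := Real.log_le_log (by linarith) hMx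
  have hL'lb : L - ℓ ≤ L' := by
    rw [← hLl]; exact Real.log_le_log (by positivity) (le_max_left _ _)
  set u : ℝ := Real.log L' with hudef
  set v : ℝ := Real.log L with hvdef
  have hu : 0 < u := Real.log_pos hL'1
  have hv : 0 < v := Real.log_pos hL1
  have huv : u ≤ v := Real.log_le_log (by linarith) hL'L
  have hv₀v : v₀ ≤ v := Real.log_le_log (by linarith) hL4
  have hllx : loglog x = v := by rw [loglog, max_eq_left (by linarith : (3:ℝ) ≤ x)]
  have hllxn : loglog (x / n) = u := rfl
  have hL0 : (0:ℝ) < L := by linarith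
  have hLγ : (0:ℝ) < L ^ γ := Real.rpow_pos_of_pos hL0 γ
  have hLlγ : (0:ℝ) < (L - ℓ) ^ γ := Real.rpow_pos_of_pos hLlpos γ
  have huk : (0:ℝ) < u ^ k := Real.rpow_pos_of_pos hu k
  have hvk : (0:ℝ) < v ^ k := Real.rpow_pos_of_pos hv k
  have hukvk : u ^ k ≤ v ^ k := Real.rpow_le_rpow hu.le huv hk
  -- T1 bound
  have hT1 : u ^ k / (L - ℓ) ^ γ - u ^ k / L ^ γ ≤ v ^ k / L ^ γ * (Dγ * (2 * ℓ / L)) := by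
    set t : ℝ := L / (L - ℓ) with htdef
    have ht1 : 1 ≤ t := (le_div_iff₀ hLlpos).mpr (by linarith)
    have ht2 : t ≤ 2 := by rw [div_le_iff₀ hLlpos]; linarith
    have htγ : t ^ γ = L ^ γ / (L - ℓ) ^ γ := Real.div_rpow hL0.le hLlpos.le γ
    have key : t ^ γ - 1 ≤ Dγ * (t - 1) := aux_pow γ t ht1 ht2
    have htm1 : t - 1 ≤ 2 * ℓ / L := by
      have e : t - 1 = ℓ / (L - ℓ) := by
        rw [htdef, div_sub_one hLlpos.ne']; congr 1; ring
      have h1 : ℓ / (L - ℓ) ≤ ℓ / (L / 2) := by gcongr <;> linarith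
      have h2 : ℓ / (L / 2) = 2 * ℓ / L := by
        rw [div_div_eq_mul_div]; ring
      rw [e]; linarith
    have e1 : u ^ k / (L - ℓ) ^ γ - u ^ k / L ^ γ = u ^ k / L ^ γ * (t ^ γ - 1) := by
      rw [htγ]; field_simp
    rw [e1]
    calc u ^ k / L ^ γ * (t ^ γ - 1) ≤ u ^ k / L ^ γ * (Dγ * (2 * ℓ / L)) := by
          apply mul_le_mul_of_nonneg_left _ (by positivity)
          calc t ^ γ - 1 ≤ Dγ * (t - 1) := key
            _ ≤ Dγ * (2 * ℓ / L) := mul_le_mul_of_nonneg_left htm1 hDγ.le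
      _ ≤ v ^ k / L ^ γ * (Dγ * (2 * ℓ / L)) := by gcongr
  -- v - u bound
  have hvu : v - u ≤ 2 * ℓ / L := by
    have e : v - u = Real.log (L / L') := by rw [Real.log_div (by linarith) (by linarith)]
    have h1 : Real.log (L / L') ≤ L / L' - 1 :=
      Real.log_le_sub_one_of_pos (by positivity)
    have h2 : L / L' - 1 = (L - L') / L' := by
      rw [div_sub_one (by linarith : L' ≠ 0)]
    have h3 : (L - L') / L' ≤ ℓ / (L / 2) := by
      apply div_le_div₀ (by linarith) (by linarith) (by linarith) (by linarith)
    have h4 : ℓ / (L / 2) = 2 * ℓ / L := by rw [div_div_eq_mul_div]; ring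
    rw [e]; linarith
  -- T2 bound
  have hsk : v ^ k - u ^ k ≤ E * (v ^ k * ((v - u) / v)) := by
    set s : ℝ := u / v with hsdef
    have hs0 : 0 < s := by positivity
    have hs1 : s ≤ 1 := (div_le_one hv).mpr huv
    have husv : u ^ k = s ^ k * v ^ k := by
      rw [hsdef, Real.div_rpow hu.le hv.le k]; field_simp
    have h1ms : 1 - s = (v - u) / v := by
      rw [hsdef, eq_div_iff hv.ne', sub_mul, one_mul, div_mul_cancel₀ _ hv.ne']
    have hskpos : (0:ℝ) < s ^ k := Real.rpow_pos_of_pos hs0 k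
    have key : 1 - s ^ k ≤ E * (1 - s) := by
      have hE2 : (2:ℝ) ≤ E := by rw [hEdef]; linarith
      rcases le_total s (1/2) with hhalf | hhalf
      · have h1 : 1 - s ^ k ≤ 1 := by linarith
        have h2 : (2:ℝ) * (1 - s) ≤ E * (1 - s) :=
          mul_le_mul_of_nonneg_right hE2 (by linarith)
        linarith
      · set t : ℝ := 1 / s with htdef
        have ht1 : 1 ≤ t := (le_div_iff₀ hs0).mpr (by linarith)
        have ht2 : t ≤ 2 := by rw [div_le_iff₀ hs0]; linarith
        have hst : s ^ k * t ^ k = 1 := by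
          rw [← Real.mul_rpow hs0.le (by positivity), mul_one_div, div_self hs0.ne',
            Real.one_rpow]
        have hkey : t ^ k - 1 ≤ Dk * (t - 1) := aux_pow k t ht1 ht2
        have hsk1 : s ^ k ≤ 1 := Real.rpow_le_one hs0.le hs1 hk
        have htk1 : 1 ≤ t ^ k := Real.one_le_rpow ht1 hk
        have htm1 : t - 1 ≤ 2 * (1 - s) := by
          have e : t - 1 = (1 - s) / s := by
            rw [htdef, div_sub_one hs0.ne']
          rw [e, div_le_iff₀ hs0]
          have hq : (0:ℝ) ≤ (1 - s) * (2 * s - 1) :=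
            mul_nonneg (by linarith) (by linarith)
          linarith [hq]
        have step : 1 - s ^ k = s ^ k * (t ^ k - 1) := by
          rw [mul_sub, hst]; ring
        have step2 : s ^ k * (t ^ k - 1) ≤ 1 * (t ^ k - 1) :=
          mul_le_mul_of_nonneg_right hsk1 (by linarith)
        have step3 : t ^ k - 1 ≤ Dk * (2 * (1 - s)) :=
          hkey.trans (mul_le_mul_of_nonneg_left htm1 hDk.le)
        rw [hEdef]
        linarith [step, step2, step3, mul_nonneg hDk.le (by linarith : (0:ℝ) ≤ 1 - s)]
    calc v ^ k - u ^ k = v ^ k * (1 - s ^ k) := by rw [husv]; ring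
      _ ≤ v ^ k * (E * (1 - s)) := mul_le_mul_of_nonneg_left key hvk.le
      _ = E * (v ^ k * ((v - u) / v)) := by rw [← h1ms]; ring
  have hT2 : (v ^ k - u ^ k) / L ^ γ ≤ v ^ k / L ^ γ * (E * (2 * ℓ / L) / v₀) := by
    have h1 : (v - u) / v ≤ (2 * ℓ / L) / v₀ :=
      div_le_div₀ (by positivity) hvu hv₀ hv₀v
    have h2 : v ^ k - u ^ k ≤ E * (v ^ k * ((2 * ℓ / L) / v₀)) := by
      refine hsk.trans ?_
      gcongr
    calc (v ^ k - u ^ k) / L ^ γ ≤ E * (v ^ k * ((2 * ℓ / L) / v₀)) / L ^ γ := by gcongr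
      _ = v ^ k / L ^ γ * (E * (2 * ℓ / L) / v₀) := by ring
  -- combine
  rw [hllx, hllxn, hLl]
  have hT1nn : 0 ≤ u ^ k / (L - ℓ) ^ γ - u ^ k / L ^ γ := by
    rw [sub_nonneg]
    exact div_le_div_of_nonneg_left huk.le hLlγ
      (Real.rpow_le_rpow hLlpos.le (by linarith) hγ.le)
  have hT2nn : 0 ≤ (v ^ k - u ^ k) / L ^ γ := by
    apply div_nonneg (by linarith) hLγ.le
  have habs : |u ^ k / (L - ℓ) ^ γ - v ^ k / L ^ γ| ≤
      (u ^ k / (L - ℓ) ^ γ - u ^ k / L ^ γ) + (v ^ k - u ^ k) / L ^ γ := by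
    have decomp : u ^ k / (L - ℓ) ^ γ - v ^ k / L ^ γ =
        (u ^ k / (L - ℓ) ^ γ - u ^ k / L ^ γ) - (v ^ k - u ^ k) / L ^ γ := by ring
    rw [decomp]
    exact (abs_sub _ _).trans (by rw [abs_of_nonneg hT1nn, abs_of_nonneg hT2nn])
  refine habs.trans ?_
  have hfin : (u ^ k / (L - ℓ) ^ γ - u ^ k / L ^ γ) + (v ^ k - u ^ k) / L ^ γ ≤
      v ^ k / L ^ γ * (Dγ * (2 * ℓ / L)) + v ^ k / L ^ γ * (E * (2 * ℓ / L) / v₀) :=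
    add_le_add hT1 hT2
  refine hfin.trans (le_of_eq ?_)
  ring
end

section
/- Let γ > 0 be a real number that is not an integer, let p be a prime, and let α ≥ 0 be an integer. Then there exists a constant C > 0 such that for all real y ≥ 2, |Σ_{q ≤ √y, q prime, q ≡ 1 (mod p^α)} 1/(q·(log(y/q))^γ) − log₂y/(φ(p^α)·(log y)^γ)| ≤ C/(log y)^γ. -/
set_option maxHeartbeats 1000000


open ArithmeticFunction vonMangoldt Complex

/-- Two-sided version of `LSeries_residueClass_lower_bound`. -/
lemma two_sided_bound {q : ℕ} [NeZero q] {a : ZMod q} (ha : IsUnit a) :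
    ∃ C : ℝ, ∀ {x : ℝ} (_ : x ∈ Set.Ioc 1 2),
      |(∑' n, residueClass a n / (n : ℝ) ^ x) - (q.totient : ℝ)⁻¹ / (x - 1)| ≤ C := by
  have H {x : ℝ} (hx : 1 < x) :
      ∑' n, residueClass a n / (n : ℝ) ^ x =
        (LFunctionResidueClassAux a x).re + (q.totient : ℝ)⁻¹ / (x - 1) := by
    refine ofReal_injective ?_
    simp only [ofReal_tsum, ofReal_div, ofReal_cpow (Nat.cast_nonneg _), ofReal_natCast,
      ofReal_add, ofReal_inv, ofReal_sub, ofReal_one]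
    simp_rw [← LFunctionResidueClassAux_real ha hx,
      eqOn_LFunctionResidueClassAux ha <| Set.mem_setOf.mpr (ofReal_re x ▸ hx), sub_add_cancel,
      LSeries, LSeries.term]
    refine tsum_congr fun n ↦ ?_
    split_ifs with hn
    · simp only [hn, residueClass_apply_zero, ofReal_zero, zero_div]
    · rfl
  have hcont : ContinuousOn (fun x : ℝ ↦ (LFunctionResidueClassAux a x).re) (Set.Icc 1 2) :=
    continuous_re.continuousOn.comp (t := Set.univ) (continuousOn_LFunctionResidueClassAux a)
      (fun ⦃x⦄ a ↦ trivial) |>.comp continuous_ofReal.continuousOn fun x hx ↦ by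
        simpa only [Set.mem_setOf_eq, ofReal_re] using hx.1
  obtain ⟨C, hC⟩ := (isCompact_Icc.image_of_continuousOn hcont).isBounded.subset_closedBall 0
  refine ⟨C, fun {x} hx ↦ ?_⟩
  rw [H hx.1, add_sub_cancel_right]
  have h2 := hC (Set.mem_image_of_mem _ (Set.mem_Icc_of_Ioc hx))
  rw [Metric.mem_closedBall, Real.dist_eq, sub_zero] at h2
  exact h2

section StepD

open LSeries

/-- helper: real-coefficient L-series at real argument is the real tsum. -/
lemma LSeries_real_eq (g : ℕ → ℝ) (hg : g 0 = 0) (x : ℝ) :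
    LSeries (fun n => ((g n : ℝ) : ℂ)) x = (((∑' n, g n / (n : ℝ) ^ x) : ℝ) : ℂ) := by
  rw [ofReal_tsum, LSeries]
  refine tsum_congr fun n ↦ ?_
  rcases eq_or_ne n 0 with rfl | hn
  · simp [LSeries.term_zero, hg]
  · rw [LSeries.term_of_ne_zero hn, ofReal_div, ofReal_cpow (Nat.cast_nonneg _)]
    norm_num

lemma nonprime_primePow_ge_four {n : ℕ} (h : IsPrimePow n) (h2 : ¬ n.Prime) : 4 ≤ n := by
  obtain ⟨p, k, hp, hk, rfl⟩ := h
  have hp' : p.Prime := hp.nat_prime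
  rcases Nat.lt_or_ge k 2 with hk2 | hk2
  · have hk1 : k = 1 := by omega
    subst hk1
    simp only [pow_one] at h2 ⊢
    exact absurd hp' h2
  · calc (4 : ℕ) = 2 ^ 2 := by norm_num
      _ ≤ p ^ 2 := Nat.pow_le_pow_left hp'.two_le 2
      _ ≤ p ^ k := Nat.pow_le_pow_right hp'.pos hk2

end StepD

section StepDmain

open LSeries ArithmeticFunction vonMangoldt

variable {q : ℕ} [NeZero q] {a : ZMod q}

/-- The prime-restricted Dirichlet series. -/
noncomputable def Pser (q : ℕ) (a : ZMod q) (s : ℝ) : ℝ :=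
  ∑' n : ℕ, (if n.Prime ∧ (n : ZMod q) = a then 1 else 0) / (n : ℝ) ^ s

lemma rc_one : residueClass a 1 = 0 := by
  simp [residueClass, Set.indicator_apply, vonMangoldt_apply_one]

lemma Pser_bound (ha : IsUnit a) :
    ∃ C : ℝ, ∀ s ∈ Set.Ioc (1:ℝ) 2,
      |Pser q a s + (q.totient : ℝ)⁻¹ * Real.log (s - 1)| ≤ C := by
  classical
  set f : ℕ → ℝ := fun n => residueClass a n / Real.log n with hf_def
  have hf0 : f 0 = 0 := by simp [hf_def]
  have hf_nonneg : ∀ n, 0 ≤ f n := fun n =>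
    div_nonneg (residueClass_nonneg a n) (Real.log_natCast_nonneg n)
  have hf_le_one : ∀ n, f n ≤ 1 := by
    intro n
    rcases le_or_gt (Real.log n) 0 with h | h
    · have : Real.log n = 0 := le_antisymm h (Real.log_natCast_nonneg n)
      simp [hf_def, this]
    · rw [hf_def, div_le_one h]
      exact (residueClass_le a n).trans vonMangoldt_le_log
  set fc : ℕ → ℂ := fun n => ((f n : ℝ) : ℂ) with hfc_def
  have habs : abscissaOfAbsConv fc ≤ 1 := by
    refine abscissaOfAbsConv_le_of_le_const ⟨1, fun n _ => ?_⟩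
    rw [hfc_def, Complex.norm_real, Real.norm_eq_abs, _root_.abs_of_nonneg (hf_nonneg n)]
    exact hf_le_one n
  have hlogMul : logMul fc = fun n : ℕ => ((residueClass a n : ℝ) : ℂ) := by
    funext n
    match n with
    | 0 => simp [logMul, hfc_def, hf0]
    | 1 => simp [logMul, hfc_def, hf_def, rc_one]
    | (m+2) =>
      have h1 : (1:ℝ) < ((m+2 : ℕ):ℝ) := by exact_mod_cast Nat.one_lt_succ_succ m
      have hlogne : Real.log ((m+2 : ℕ):ℝ) ≠ 0 := ne_of_gt (Real.log_pos h1)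
      show Complex.log _ * _ = _
      rw [← Complex.natCast_log, hfc_def, hf_def, ← Complex.ofReal_mul]
      congr 1
      exact mul_div_cancel₀ _ hlogne
  -- derivative fact
  have hderiv : ∀ x : ℝ, 1 < x →
      HasDerivAt (fun y : ℝ => (LSeries fc (y : ℂ)).re)
        (-(∑' n, residueClass a n / (n : ℝ) ^ x)) x := by
    intro x hx
    have h1 : HasDerivAt (LSeries fc) (-(LSeries (logMul fc) (x : ℂ))) (x : ℂ) :=
      LSeries_hasDerivAt (habs.trans_lt (by exact_mod_cast hx))
    have h2 := h1.real_of_complex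
    have h3 : LSeries (logMul fc) (x : ℂ) =
        (((∑' n, residueClass a n / (n : ℝ) ^ x : ℝ)) : ℂ) := by
      rw [hlogMul]
      exact LSeries_real_eq _ (by simp) x
    rw [h3] at h2
    simpa using h2
  obtain ⟨C₁, hC₁⟩ := two_sided_bound ha
  have hC₁0 : 0 ≤ C₁ := by
    have := hC₁ (Set.mem_Ioc.mpr ⟨by norm_num, le_rfl⟩ : (2:ℝ) ∈ Set.Ioc 1 2)
    exact (abs_nonneg _).trans this
  set c : ℝ := (q.totient : ℝ)⁻¹ with hc_def
  set K : ℝ → ℝ := fun y => (LSeries fc (y : ℂ)).re + c * Real.log (y - 1) with hK_def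
  set K' : ℝ → ℝ := fun x => -(∑' n, residueClass a n / (n : ℝ) ^ x) + c * (x - 1)⁻¹
    with hK'_def
  have hKderiv : ∀ x ∈ Set.Ioc (1:ℝ) 2, HasDerivAt K (K' x) x := by
    intro x hx
    have hlog1 : HasDerivAt (fun y : ℝ => Real.log (y - 1)) (x - 1)⁻¹ x := by
      have h := (Real.hasDerivAt_log (by linarith [hx.1] : x - 1 ≠ 0)).comp x
        ((hasDerivAt_id x).sub_const 1)
      rw [mul_one] at h; exact h
    exact (hderiv x hx.1).add (hlog1.const_mul c)
  have hK'bound : ∀ x ∈ Set.Ioc (1:ℝ) 2, ‖K' x‖ ≤ C₁ := by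
    intro x hx
    have h := hC₁ hx
    have e : K' x = -((∑' n, residueClass a n / (n : ℝ) ^ x) - c / (x - 1)) := by
      simp only [hK'_def]
      rw [div_eq_mul_inv]; ring
    rw [e, norm_neg, Real.norm_eq_abs]
    exact h
  -- MVT on [s, 2]
  have hMVT : ∀ s ∈ Set.Ioc (1:ℝ) 2, |K 2 - K s| ≤ C₁ := by
    intro s hs
    have hsub : Set.Icc s 2 ⊆ Set.Ioc (1:ℝ) 2 := fun x hx =>
      ⟨lt_of_lt_of_le hs.1 hx.1, hx.2⟩
    have := (convex_Icc s 2).norm_image_sub_le_of_norm_hasDerivWithin_le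
      (fun x hx => (hKderiv x (hsub hx)).hasDerivWithinAt)
      (fun x hx => hK'bound x (hsub hx))
      (Set.left_mem_Icc.mpr hs.2) (Set.right_mem_Icc.mpr hs.2)
    rw [Real.norm_eq_abs, Real.norm_eq_abs] at this
    calc |K 2 - K s| ≤ C₁ * |2 - s| := this
      _ ≤ C₁ * 1 := by
          apply mul_le_mul_of_nonneg_left _ hC₁0
          rw [_root_.abs_of_nonneg (by linarith [hs.2])]
          linarith [hs.1]
      _ = C₁ := mul_one C₁
  -- decomposition at s
  set B : ℝ := ∑' n : ℕ, (if n.Prime then 0 else residueClass a n) / n with hB_def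
  have hBsummable := summable_residueClass_non_primes_div a
  have hB0 : 0 ≤ B := tsum_nonneg fun n =>
    div_nonneg (by split_ifs with h; exact le_rfl; exact residueClass_nonneg a n)
      (Nat.cast_nonneg n)
  refine ⟨C₁ + |K 2| + B, fun s hs => ?_⟩
  have hs1 : (1:ℝ) < s := hs.1
  have htot : Summable (fun n : ℕ => f n / (n:ℝ)^s) := by
    refine summable_real_of_abscissaOfAbsConv_lt (x := s) ?_
    exact lt_of_le_of_lt habs (by exact_mod_cast hs1)
  have nonneg1 : ∀ n : ℕ, 0 ≤ (if n.Prime ∧ (n : ZMod q) = a then (1:ℝ) else 0) / (n:ℝ)^s :=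
    fun n => div_nonneg (by split_ifs <;> norm_num) (Real.rpow_nonneg (Nat.cast_nonneg n) s)
  have nonneg2 : ∀ n : ℕ, 0 ≤ (if n.Prime then 0 else f n) / (n:ℝ)^s :=
    fun n => div_nonneg (by split_ifs with h; exact le_rfl; exact hf_nonneg n)
      (Real.rpow_nonneg (Nat.cast_nonneg n) s)
  have hsplit : ∀ n : ℕ, f n / (n:ℝ)^s =
      (if n.Prime ∧ (n : ZMod q) = a then (1:ℝ) else 0) / (n:ℝ)^s
        + (if n.Prime then 0 else f n) / (n:ℝ)^s := by
    intro n
    by_cases hp : n.Prime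
    · have hlog : Real.log n ≠ 0 := ne_of_gt (Real.log_pos (by exact_mod_cast hp.one_lt))
      have hfn : f n = (if (n : ZMod q) = a then (1:ℝ) else 0) := by
        simp only [hf_def, residueClass, Set.indicator_apply, Set.mem_setOf_eq]
        split_ifs with h
        · rw [vonMangoldt_apply_prime hp, div_self hlog]
        · simp
      rw [hfn]
      simp [hp]
    · simp [hp]
  have h1sum : Summable (fun n : ℕ =>
      (if n.Prime ∧ (n : ZMod q) = a then (1:ℝ) else 0) / (n:ℝ)^s) := by
    refine htot.of_nonneg_of_le nonneg1 fun n => ?_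
    rw [hsplit n]
    linarith [nonneg2 n]
  have h2sum : Summable (fun n : ℕ => (if n.Prime then 0 else f n) / (n:ℝ)^s) := by
    refine htot.of_nonneg_of_le nonneg2 fun n => ?_
    rw [hsplit n]
    linarith [nonneg1 n]
  set N : ℝ := ∑' n : ℕ, (if n.Prime then 0 else f n) / (n:ℝ)^s with hN_def
  have hLs : (LSeries fc (s:ℂ)).re = Pser q a s + N := by
    have h0 := LSeries_real_eq f hf0 s
    have : (LSeries fc (s:ℂ)).re = ∑' n : ℕ, f n / (n:ℝ)^s := by
      rw [hfc_def, h0, Complex.ofReal_re]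
    rw [this, tsum_congr hsplit, Summable.tsum_add h1sum h2sum]
    rfl
  have hN0 : 0 ≤ N := tsum_nonneg nonneg2
  have hNB : N ≤ B := by
    refine Summable.tsum_le_tsum (fun n => ?_) h2sum hBsummable
    by_cases hp : n.Prime
    · simp [hp]
    · simp only [hp, if_false]
      rcases eq_or_ne (residueClass a n) 0 with h0 | h0
      · simp [hf_def, h0]
      · have hrcpos : 0 < residueClass a n := (residueClass_nonneg a n).lt_of_ne (Ne.symm h0)
        have hΛ : ArithmeticFunction.vonMangoldt n ≠ 0 := by
          intro h
          exact absurd ((residueClass_le a n).trans_eq h) (not_le.mpr hrcpos)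
        have hn4 : 4 ≤ n := nonprime_primePow_ge_four (vonMangoldt_ne_zero_iff.mp hΛ) hp
        have hn1 : (1:ℝ) ≤ (n:ℝ) := by exact_mod_cast le_trans (by norm_num) hn4
        have hnpos : (0:ℝ) < (n:ℝ) := by linarith
        have hlogn : 1 ≤ Real.log n := by
          rw [Real.le_log_iff_exp_le hnpos]
          calc Real.exp 1 ≤ 2.7182818286 := le_of_lt Real.exp_one_lt_d9
            _ ≤ (4:ℝ) := by norm_num
            _ ≤ (n:ℝ) := by exact_mod_cast hn4
        have hns : (n:ℝ) ≤ Real.log n * (n:ℝ)^s := by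
          have h1 : (n:ℝ) ≤ (n:ℝ)^s := by
            conv_lhs => rw [← Real.rpow_one (n:ℝ)]
            exact Real.rpow_le_rpow_of_exponent_le hn1 hs1.le
          calc (n:ℝ) ≤ (n:ℝ)^s := h1
            _ = 1 * (n:ℝ)^s := (one_mul _).symm
            _ ≤ Real.log n * (n:ℝ)^s :=
                mul_le_mul_of_nonneg_right hlogn (Real.rpow_nonneg (Nat.cast_nonneg n) s)
        have := div_le_div_of_nonneg_left hrcpos.le hnpos hns
        calc f n / (n:ℝ)^s = residueClass a n / (Real.log n * (n:ℝ)^s) := by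
              rw [hf_def]; rw [div_div]
          _ ≤ residueClass a n / (n:ℝ) := this
  -- assemble
  have hKs := hMVT s hs
  have heq : Pser q a s + c * Real.log (s-1) = K s - N := by
    simp only [hK_def]
    rw [hLs]
    ring
  rw [heq]
  have h1 : |K s| ≤ |K 2| + C₁ := by
    have e : K s = K 2 - (K 2 - K s) := by ring
    rw [e]
    calc |K 2 - (K 2 - K s)| ≤ |K 2| + |K 2 - K s| := abs_sub _ _
      _ ≤ |K 2| + C₁ := by linarith
  calc |K s - N| ≤ |K s| + |N| := abs_sub _ _
    _ ≤ (|K 2| + C₁) + B := by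
        rw [_root_.abs_of_nonneg hN0]
        linarith
    _ = C₁ + |K 2| + B := by ring

end StepDmain

section StepE

open LSeries ArithmeticFunction vonMangoldt Finset

lemma rc_one_eq_vonMangoldt (n : ℕ) : residueClass (1 : ZMod 1) n = ArithmeticFunction.vonMangoldt n := by
  simp [residueClass, Set.indicator_apply, Subsingleton.elim ((n : ZMod 1)) 1]

lemma psi_summable {s : ℝ} (hs : 1 < s) :
    Summable (fun n : ℕ => ArithmeticFunction.vonMangoldt n / (n:ℝ)^s) := by
  have h : Summable (fun n : ℕ => residueClass (1 : ZMod 1) n / (n:ℝ)^s) := by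
    refine summable_real_of_abscissaOfAbsConv_lt (x := s) ?_
    exact lt_of_le_of_lt (abscissaOfAbsConv_residueClass_le_one (1 : ZMod 1))
      (by exact_mod_cast hs)
  simpa only [rc_one_eq_vonMangoldt] using h

lemma psi_total_bound :
    ∃ C₀ : ℝ, 0 ≤ C₀ ∧ ∀ s ∈ Set.Ioc (1:ℝ) 2,
      (∑' n : ℕ, ArithmeticFunction.vonMangoldt n / (n:ℝ)^s) ≤ 1/(s-1) + C₀ := by
  obtain ⟨C, hC⟩ := two_sided_bound (q := 1) (a := 1) isUnit_one
  refine ⟨|C|, abs_nonneg C, fun s hs => ?_⟩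
  have h := hC hs
  have he : (∑' n : ℕ, residueClass (1 : ZMod 1) n / (n:ℝ)^s) =
      ∑' n : ℕ, ArithmeticFunction.vonMangoldt n / (n:ℝ)^s := by
    exact tsum_congr fun n => by rw [rc_one_eq_vonMangoldt]
  rw [he] at h
  have h2 : ((Nat.totient 1 : ℝ))⁻¹ = 1 := by norm_num [Nat.totient_one]
  rw [h2] at h
  have := abs_le.mp h
  have h3 : (1:ℝ)/(s-1) = 1/(s-1) := rfl
  have := this.2
  calc (∑' n : ℕ, ArithmeticFunction.vonMangoldt n / (n:ℝ)^s)
      ≤ 1/(s-1) + C := by linarith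
    _ ≤ 1/(s-1) + |C| := by linarith [le_abs_self C]

/-- Mertens' theorem in arithmetic progressions, O(1) version. -/
lemma mertens_ap {q : ℕ} [NeZero q] {a : ZMod q} (ha : IsUnit a) :
    ∃ C : ℝ, 0 ≤ C ∧ ∀ X : ℝ, 3 ≤ X →
      |(∑ n ∈ (Finset.Icc 1 ⌊X⌋₊).filter (fun n : ℕ => n.Prime ∧ (n : ZMod q) = a),
          1 / (n:ℝ)) - (q.totient : ℝ)⁻¹ * Real.log (Real.log X)| ≤ C := by
  classical
  obtain ⟨C₀, hC₀0, hC₀⟩ := psi_total_bound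
  obtain ⟨CD, hCD⟩ := Pser_bound ha
  have hCD0 : 0 ≤ CD := le_trans (abs_nonneg _) (hCD 2 ⟨by norm_num, le_rfl⟩)
  refine ⟨Real.exp 1 * (1 + C₀) + (1 + C₀) + CD, by positivity, fun X hX => ?_⟩
  set L : ℝ := Real.log X with hL_def
  have hL1 : 1 < L := by
    rw [hL_def, Real.lt_log_iff_exp_lt (by linarith)]
    calc Real.exp 1 ≤ 2.7182818286 := le_of_lt Real.exp_one_lt_d9
      _ < 3 := by norm_num
      _ ≤ X := hX
  have hL0 : 0 < L := by linarith
  set s : ℝ := 1 + 1/L with hs_def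
  have hs1 : 1 < s := by
    rw [hs_def]
    have h01 : 0 < 1/L := by positivity
    linarith
  have hs2 : s ≤ 2 := by
    rw [hs_def]
    have : 1/L ≤ 1 := by rw [div_le_one hL0]; linarith
    linarith
  have hsmem : s ∈ Set.Ioc (1:ℝ) 2 := ⟨hs1, hs2⟩
  have hsm1 : s - 1 = 1/L := by rw [hs_def]; ring
  set F : Finset ℕ := (Finset.Icc 1 ⌊X⌋₊).filter (fun n : ℕ => n.Prime ∧ (n : ZMod q) = a)
    with hF_def
  have hF_prime : ∀ n ∈ F, n.Prime ∧ (n : ZMod q) = a ∧ (n:ℝ) ≤ X := by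
    intro n hn
    rw [hF_def, Finset.mem_filter, Finset.mem_Icc] at hn
    refine ⟨hn.2.1, hn.2.2, ?_⟩
    calc (n:ℝ) ≤ (⌊X⌋₊ : ℝ) := by exact_mod_cast hn.1.2
      _ ≤ X := Nat.floor_le (by linarith)
  have hpsi := hC₀ s hsmem
  have hpsisum := psi_summable hs1
  have hpsi_nonneg : ∀ n : ℕ, 0 ≤ ArithmeticFunction.vonMangoldt n / (n:ℝ)^s :=
    fun n => div_nonneg vonMangoldt_nonneg (Real.rpow_nonneg (Nat.cast_nonneg n) s)
  -- the indicator function g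
  set g : ℕ → ℝ := fun n => (if n.Prime ∧ (n : ZMod q) = a then (1:ℝ) else 0) / (n:ℝ)^s
    with hg_def
  have hg_nonneg : ∀ n, 0 ≤ g n := fun n =>
    div_nonneg (by split_ifs <;> norm_num) (Real.rpow_nonneg (Nat.cast_nonneg n) s)
  have hg_le : ∀ n : ℕ, g n ≤ ((n:ℝ)^s)⁻¹ := by
    intro n
    rw [hg_def]
    simp only
    split_ifs
    · rw [one_div]
    · rw [zero_div]; positivity
  have hg_sum : Summable g := by
    refine Summable.of_nonneg_of_le hg_nonneg hg_le ?_
    exact (Real.summable_nat_rpow_inv).mpr hs1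
  have hPser : Pser q a s = ∑' n, g n := rfl
  -- finite sum of g over F
  have hsumF_g : ∑ n ∈ F, g n = ∑ n ∈ F, 1/(n:ℝ)^s := by
    refine Finset.sum_congr rfl fun n hn => ?_
    have hmem := hF_prime n hn
    rw [hg_def]
    simp only [if_pos (And.intro hmem.1 hmem.2.1)]
  have h_lower : ∑ n ∈ F, g n ≤ Pser q a s := by
    rw [hPser]
    exact Summable.sum_le_tsum F (fun n _ => hg_nonneg n) hg_sum
  -- tail bound
  have hh_sum : Summable (fun n : ℕ => ArithmeticFunction.vonMangoldt n / (n:ℝ)^s * L⁻¹) :=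
    hpsisum.mul_right _
  have hh_nonneg : ∀ n : ℕ, 0 ≤ ArithmeticFunction.vonMangoldt n / (n:ℝ)^s * L⁻¹ :=
    fun n => mul_nonneg (hpsi_nonneg n) (inv_nonneg.mpr hL0.le)
  have h_upper : Pser q a s ≤ ∑ n ∈ F, g n + (1 + C₀) := by
    have hsplit := Summable.sum_add_tsum_compl (s := F) hg_sum
    have htail : (∑' n : ((F : Set ℕ)ᶜ : Set ℕ), g n) ≤ 1 + C₀ := by
      have hle : ∀ n : ((F : Set ℕ)ᶜ : Set ℕ),
          g n ≤ ArithmeticFunction.vonMangoldt (n:ℕ) / ((n:ℕ):ℝ)^s * L⁻¹ := by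
        rintro ⟨n, hn⟩
        simp only [Set.mem_compl_iff, Finset.mem_coe] at hn
        by_cases hc : n.Prime ∧ (n : ZMod q) = a
        · have hnIcc : n ∉ Finset.Icc 1 ⌊X⌋₊ := fun h => hn (by
            rw [hF_def, Finset.mem_filter]; exact ⟨h, hc⟩)
          have hn2 : 1 ≤ n := hc.1.one_lt.le
          have hXn : X < (n:ℝ) := by
            rw [Finset.mem_Icc] at hnIcc
            push_neg at hnIcc
            exact (Nat.floor_lt (by linarith : (0:ℝ) ≤ X)).mp (hnIcc hn2)
          have hlogn : L ≤ Real.log n := by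
            rw [hL_def]
            exact Real.log_le_log (by linarith) hXn.le
          have h1L : (1:ℝ) ≤ Real.log n * L⁻¹ := by
            rw [← div_eq_mul_inv, le_div_iff₀ hL0]
            linarith
          rw [hg_def]
          simp only [if_pos hc]
          rw [vonMangoldt_apply_prime hc.1, one_div]
          calc ((n:ℝ)^s)⁻¹ = ((n:ℝ)^s)⁻¹ * 1 := (mul_one _).symm
            _ ≤ ((n:ℝ)^s)⁻¹ * (Real.log n * L⁻¹) := by
                refine mul_le_mul_of_nonneg_left h1L ?_
                positivity
            _ = Real.log n / (n:ℝ)^s * L⁻¹ := by rw [div_eq_mul_inv]; ring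
        · rw [hg_def]
          simp only [if_neg hc, zero_div]
          exact hh_nonneg n
      calc (∑' n : ((F : Set ℕ)ᶜ : Set ℕ), g n)
          ≤ ∑' n : ((F : Set ℕ)ᶜ : Set ℕ),
              ArithmeticFunction.vonMangoldt (n:ℕ) / ((n:ℕ):ℝ)^s * L⁻¹ :=
            Summable.tsum_le_tsum hle (hg_sum.subtype _) (hh_sum.subtype _)
        _ ≤ ∑' n : ℕ, ArithmeticFunction.vonMangoldt n / (n:ℝ)^s * L⁻¹ := by
            have h2 := Summable.sum_add_tsum_compl (s := F) hh_sum
            have h3 : 0 ≤ ∑ n ∈ F, ArithmeticFunction.vonMangoldt n / (n:ℝ)^s * L⁻¹ :=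
              Finset.sum_nonneg fun n _ => hh_nonneg n
            linarith
        _ = (∑' n : ℕ, ArithmeticFunction.vonMangoldt n / (n:ℝ)^s) * L⁻¹ := tsum_mul_right
        _ ≤ (1/(s-1) + C₀) * L⁻¹ := by
            refine mul_le_mul_of_nonneg_right hpsi (inv_nonneg.mpr hL0.le)
        _ = (L + C₀) * L⁻¹ := by rw [hsm1, one_div_one_div]
        _ = 1 + C₀ * L⁻¹ := by field_simp
        _ ≤ 1 + C₀ := by
            have : C₀ * L⁻¹ ≤ C₀ * 1 := by
              refine mul_le_mul_of_nonneg_left ?_ hC₀0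
              rw [inv_le_one_iff₀]
              right; linarith
            linarith
    rw [hPser, ← hsplit]
    linarith
  -- S vs ∑_F 1/n^s
  set S : ℝ := ∑ n ∈ F, 1/(n:ℝ) with hS_def
  have hterm : ∀ n ∈ F, 0 ≤ 1/(n:ℝ) - 1/(n:ℝ)^s ∧
      1/(n:ℝ) - 1/(n:ℝ)^s ≤ Real.exp 1 * (s-1) *
        (ArithmeticFunction.vonMangoldt n / (n:ℝ)^s) := by
    intro n hn
    obtain ⟨hprime, _, hnX⟩ := hF_prime n hn
    have hn1 : (1:ℝ) ≤ (n:ℝ) := by exact_mod_cast hprime.one_lt.le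
    have hnpos : (0:ℝ) < (n:ℝ) := by linarith
    set t : ℝ := (s-1) * Real.log n with ht_def
    have hlogn0 : 0 ≤ Real.log n := Real.log_nonneg hn1
    have ht0 : 0 ≤ t := mul_nonneg (by linarith) hlogn0
    have ht1 : t ≤ 1 := by
      rw [ht_def, hsm1]
      have hlogle : Real.log n ≤ L := by
        rw [hL_def]
        exact Real.log_le_log hnpos hnX
      calc 1/L * Real.log n ≤ 1/L * L := by
            refine mul_le_mul_of_nonneg_left hlogle ?_
            positivity
        _ = 1 := by field_simp
    have hns : (n:ℝ)^s = (n:ℝ) * Real.exp t := by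
      have h1 : (n:ℝ)^s = (n:ℝ)^(1:ℝ) * (n:ℝ)^(s-1) := by
        rw [← Real.rpow_add hnpos]; norm_num
      rw [h1, Real.rpow_one, Real.rpow_def_of_pos hnpos, ht_def, mul_comm (Real.log (n:ℝ))]
    have hnspos : (0:ℝ) < (n:ℝ)^s := Real.rpow_pos_of_pos hnpos s
    constructor
    · have h2 : (n:ℝ) ≤ (n:ℝ)^s := by
        conv_lhs => rw [← Real.rpow_one (n:ℝ)]
        exact Real.rpow_le_rpow_of_exponent_le hn1 hs1.le
      have := one_div_le_one_div_of_le hnpos h2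
      linarith
    · have hexp : 1 - Real.exp (-t) ≤ t := by
        have := Real.add_one_le_exp (-t)
        linarith
    -- 1/n - 1/n^s = (1/n)(1 - exp(-t))
      have heq : 1/(n:ℝ) - 1/(n:ℝ)^s = (1/(n:ℝ)) * (1 - Real.exp (-t)) := by
        rw [hns, Real.exp_neg]
        field_simp
      have hinv : 1/(n:ℝ) ≤ Real.exp 1 / (n:ℝ)^s := by
        rw [hns]
        rw [div_le_div_iff₀ hnpos (by positivity)]
        have : Real.exp t ≤ Real.exp 1 := Real.exp_le_exp.mpr ht1
        calc (1:ℝ) * ((n:ℝ) * Real.exp t) = (n:ℝ) * Real.exp t := one_mul _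
          _ ≤ (n:ℝ) * Real.exp 1 := by
              refine mul_le_mul_of_nonneg_left this hnpos.le
          _ = Real.exp 1 * (n:ℝ) := mul_comm _ _
      calc 1/(n:ℝ) - 1/(n:ℝ)^s = (1/(n:ℝ)) * (1 - Real.exp (-t)) := heq
        _ ≤ (1/(n:ℝ)) * t := by
            refine mul_le_mul_of_nonneg_left hexp ?_
            positivity
        _ ≤ (Real.exp 1 / (n:ℝ)^s) * t := by
            refine mul_le_mul_of_nonneg_right hinv ht0
        _ = Real.exp 1 * (s-1) * (Real.log n / (n:ℝ)^s) := by
            rw [ht_def]; field_simp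
        _ = Real.exp 1 * (s-1) * (ArithmeticFunction.vonMangoldt n / (n:ℝ)^s) := by
            rw [vonMangoldt_apply_prime hprime]
  have hSdiff : 0 ≤ S - ∑ n ∈ F, 1/(n:ℝ)^s ∧
      S - ∑ n ∈ F, 1/(n:ℝ)^s ≤ Real.exp 1 * (1 + C₀) := by
    have hsub : S - ∑ n ∈ F, 1/(n:ℝ)^s = ∑ n ∈ F, (1/(n:ℝ) - 1/(n:ℝ)^s) := by
      rw [hS_def, Finset.sum_sub_distrib]
    constructor
    · rw [hsub]
      exact Finset.sum_nonneg fun n hn => (hterm n hn).1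
    · rw [hsub]
      calc ∑ n ∈ F, (1/(n:ℝ) - 1/(n:ℝ)^s)
          ≤ ∑ n ∈ F, Real.exp 1 * (s-1) *
              (ArithmeticFunction.vonMangoldt n / (n:ℝ)^s) :=
            Finset.sum_le_sum fun n hn => (hterm n hn).2
        _ = Real.exp 1 * (s-1) *
              ∑ n ∈ F, ArithmeticFunction.vonMangoldt n / (n:ℝ)^s := by
            rw [Finset.mul_sum]
        _ ≤ Real.exp 1 * (s-1) * ∑' n : ℕ, ArithmeticFunction.vonMangoldt n / (n:ℝ)^s := by
            refine mul_le_mul_of_nonneg_left ?_ ?_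
            · exact Summable.sum_le_tsum F (fun n _ => hpsi_nonneg n) hpsisum
            · have : 0 ≤ s - 1 := by linarith
              positivity
        _ ≤ Real.exp 1 * (s-1) * (1/(s-1) + C₀) := by
            refine mul_le_mul_of_nonneg_left hpsi ?_
            have : 0 ≤ s - 1 := by linarith
            positivity
        _ = Real.exp 1 * (1 + (s-1) * C₀) := by
            have hne : s - 1 ≠ 0 := by linarith
            field_simp
        _ ≤ Real.exp 1 * (1 + C₀) := by
            refine mul_le_mul_of_nonneg_left ?_ (Real.exp_pos 1).le
            have h1 : (s-1) * C₀ ≤ 1 * C₀ := by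
              refine mul_le_mul_of_nonneg_right ?_ hC₀0
              rw [hsm1]
              rw [div_le_one hL0]
              linarith
            linarith
  -- conclusion
  have hCDs := hCD s hsmem
  have hlog_eq : Real.log (s - 1) = - Real.log L := by
    rw [hsm1, one_div, Real.log_inv]
  rw [hlog_eq] at hCDs
  have hgoal : |S - (q.totient : ℝ)⁻¹ * Real.log L| ≤
      Real.exp 1 * (1 + C₀) + (1 + C₀) + CD := by
    have e1 : S - (q.totient : ℝ)⁻¹ * Real.log L =
        (S - ∑ n ∈ F, 1/(n:ℝ)^s) + ((∑ n ∈ F, g n) - Pser q a s) +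
          (Pser q a s + (q.totient : ℝ)⁻¹ * (- Real.log L)) := by
      rw [hsumF_g]; ring
    rw [e1]
    have b1 := hSdiff
    have b2l := h_lower
    have b2u := h_upper
    have b3 := abs_le.mp hCDs
    rw [abs_le]
    constructor
    · have := b3.1
      linarith
    · have := b3.2
      linarith
  exact hgoal

end StepE

section StepF

open ArithmeticFunction vonMangoldt Finset

lemma mertens_first : ∃ C₁ : ℝ, 0 ≤ C₁ ∧ ∀ X : ℝ, 3 ≤ X →
    ∑ n ∈ (Finset.Icc 1 ⌊X⌋₊).filter Nat.Prime, Real.log n / (n:ℝ) ≤ C₁ * Real.log X := by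
  obtain ⟨C₀, hC₀0, hC₀⟩ := psi_total_bound
  refine ⟨Real.exp 1 * (1 + C₀), by positivity, fun X hX => ?_⟩
  set L : ℝ := Real.log X with hL_def
  have hL1 : 1 < L := by
    rw [hL_def, Real.lt_log_iff_exp_lt (by linarith)]
    calc Real.exp 1 ≤ 2.7182818286 := le_of_lt Real.exp_one_lt_d9
      _ < 3 := by norm_num
      _ ≤ X := hX
  have hL0 : 0 < L := by linarith
  set s : ℝ := 1 + 1/L with hs_def
  have hs1 : 1 < s := by
    rw [hs_def]
    have h01 : 0 < 1/L := by positivity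
    linarith
  have hs2 : s ≤ 2 := by
    rw [hs_def]
    have : 1/L ≤ 1 := by rw [div_le_one hL0]; linarith
    linarith
  have hsm1 : s - 1 = 1/L := by rw [hs_def]; ring
  have hpsi := hC₀ s ⟨hs1, hs2⟩
  have hpsisum := psi_summable hs1
  have hpsi_nonneg : ∀ n : ℕ, 0 ≤ ArithmeticFunction.vonMangoldt n / (n:ℝ)^s :=
    fun n => div_nonneg vonMangoldt_nonneg (Real.rpow_nonneg (Nat.cast_nonneg n) s)
  set F : Finset ℕ := (Finset.Icc 1 ⌊X⌋₊).filter Nat.Prime with hF_def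
  have hterm : ∀ n ∈ F, Real.log n / (n:ℝ) ≤
      Real.exp 1 * (ArithmeticFunction.vonMangoldt n / (n:ℝ)^s) := by
    intro n hn
    rw [hF_def, Finset.mem_filter, Finset.mem_Icc] at hn
    obtain ⟨⟨_, hnfl⟩, hprime⟩ := hn
    have hnX : (n:ℝ) ≤ X := by
      calc (n:ℝ) ≤ (⌊X⌋₊ : ℝ) := by exact_mod_cast hnfl
        _ ≤ X := Nat.floor_le (by linarith)
    have hn1 : (1:ℝ) ≤ (n:ℝ) := by exact_mod_cast hprime.one_lt.le
    have hnpos : (0:ℝ) < (n:ℝ) := by linarith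
    set t : ℝ := (s-1) * Real.log n with ht_def
    have hlogn0 : 0 ≤ Real.log n := Real.log_nonneg hn1
    have ht0 : 0 ≤ t := mul_nonneg (by linarith) hlogn0
    have ht1 : t ≤ 1 := by
      rw [ht_def, hsm1]
      have hlogle : Real.log n ≤ L := by
        rw [hL_def]; exact Real.log_le_log hnpos hnX
      calc 1/L * Real.log n ≤ 1/L * L := by
            refine mul_le_mul_of_nonneg_left hlogle ?_; positivity
        _ = 1 := by field_simp
    have hns : (n:ℝ)^s = (n:ℝ) * Real.exp t := by
      have h1 : (n:ℝ)^s = (n:ℝ)^(1:ℝ) * (n:ℝ)^(s-1) := by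
        rw [← Real.rpow_add hnpos]; norm_num
      rw [h1, Real.rpow_one, Real.rpow_def_of_pos hnpos, ht_def, mul_comm (Real.log (n:ℝ))]
    have hnspos : (0:ℝ) < (n:ℝ)^s := Real.rpow_pos_of_pos hnpos s
    have hinv : 1/(n:ℝ) ≤ Real.exp 1 / (n:ℝ)^s := by
      rw [hns, div_le_div_iff₀ hnpos (by positivity)]
      have hte : Real.exp t ≤ Real.exp 1 := Real.exp_le_exp.mpr ht1
      calc (1:ℝ) * ((n:ℝ) * Real.exp t) = (n:ℝ) * Real.exp t := one_mul _
        _ ≤ (n:ℝ) * Real.exp 1 := mul_le_mul_of_nonneg_left hte hnpos.le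
        _ = Real.exp 1 * (n:ℝ) := mul_comm _ _
    calc Real.log n / (n:ℝ) = Real.log n * (1/(n:ℝ)) := by ring
      _ ≤ Real.log n * (Real.exp 1 / (n:ℝ)^s) := mul_le_mul_of_nonneg_left hinv hlogn0
      _ = Real.exp 1 * (Real.log n / (n:ℝ)^s) := by ring
      _ = Real.exp 1 * (ArithmeticFunction.vonMangoldt n / (n:ℝ)^s) := by
          rw [vonMangoldt_apply_prime hprime]
  calc ∑ n ∈ F, Real.log n / (n:ℝ)
      ≤ ∑ n ∈ F, Real.exp 1 * (ArithmeticFunction.vonMangoldt n / (n:ℝ)^s) :=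
        Finset.sum_le_sum hterm
    _ = Real.exp 1 * ∑ n ∈ F, ArithmeticFunction.vonMangoldt n / (n:ℝ)^s := by
        rw [Finset.mul_sum]
    _ ≤ Real.exp 1 * ∑' n : ℕ, ArithmeticFunction.vonMangoldt n / (n:ℝ)^s := by
        refine mul_le_mul_of_nonneg_left ?_ (Real.exp_pos 1).le
        exact Summable.sum_le_tsum F (fun n _ => hpsi_nonneg n) hpsisum
    _ ≤ Real.exp 1 * (1/(s-1) + C₀) := by
        refine mul_le_mul_of_nonneg_left hpsi (Real.exp_pos 1).le
    _ = Real.exp 1 * (L + C₀) := by rw [hsm1, one_div_one_div]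
    _ ≤ Real.exp 1 * (1 + C₀) * L := by
        have h1 : L + C₀ ≤ (1 + C₀) * L := by nlinarith
        calc Real.exp 1 * (L + C₀) ≤ Real.exp 1 * ((1 + C₀) * L) :=
              mul_le_mul_of_nonneg_left h1 (Real.exp_pos 1).le
          _ = Real.exp 1 * (1 + C₀) * L := by ring

end StepF

theorem stmt_14 (γ : ℝ) (hγ : 0 < γ) (hγint : ∀ n : ℤ, γ ≠ (n : ℝ))
    (p : ℕ) (hp : p.Prime) (α : ℕ) :
    ∃ C : ℝ, 0 < C ∧ ∀ y : ℝ, 2 ≤ y →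
      |(∑ q ∈ (Finset.Icc 1 ⌊Real.sqrt y⌋₊).filter
            (fun q => q.Prime ∧ q % p ^ α = 1 % p ^ α),
          1 / ((q : ℝ) * Real.log (y / (q : ℝ)) ^ γ)) -
        loglog y / (((p ^ α).totient : ℝ) * Real.log y ^ γ)| ≤ C / Real.log y ^ γ := by
  classical
  haveI : NeZero (p ^ α) := ⟨pow_ne_zero α hp.pos.ne'⟩
  obtain ⟨CM, hCM0, hCM⟩ := mertens_ap (q := p ^ α) (a := 1) isUnit_one
  obtain ⟨C₁, hC₁0, hC₁⟩ := mertens_first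
  have hφ1 : (1:ℝ) ≤ ((p ^ α).totient : ℝ) := by
    have := Nat.totient_pos.mpr (NeZero.pos (p ^ α))
    exact_mod_cast this
  have hφ0 : ((p ^ α).totient : ℝ) ≠ 0 := by linarith
  have hexp3 : Real.exp 1 ≤ 3 := by
    calc Real.exp 1 ≤ 2.7182818286 := Real.exp_one_lt_d9.le
      _ ≤ 3 := by norm_num
  have hlog9 : 0 ≤ Real.log (Real.log 9) := by
    have h9 : (1:ℝ) ≤ Real.log 9 := by
      rw [Real.le_log_iff_exp_le (by norm_num)]
      linarith
    exact Real.log_nonneg h9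
  have hlog2 : 0 ≤ Real.log 2 := Real.log_nonneg (by norm_num)
  set C : ℝ := CM + Real.log 2 + γ * Real.exp γ * C₁ +
    (2 * (2:ℝ)^γ + Real.log (Real.log 9)) + 1 with hC_def
  have hC0 : 0 < C := by
    have h3 : 0 ≤ γ * Real.exp γ * C₁ := by positivity
    have h4 : (0:ℝ) ≤ 2 * (2:ℝ)^γ := by positivity
    rw [hC_def]
    linarith
  refine ⟨C, hC0, fun y hy => ?_⟩
  have hy0 : (0:ℝ) < y := by linarith
  set L : ℝ := Real.log y with hL_def
  have hL0 : 0 < L := Real.log_pos (by linarith)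
  have hLγ : 0 < L ^ γ := Real.rpow_pos_of_pos hL0 γ
  rw [le_div_iff₀ hLγ]
  have habs : ∀ t : ℝ, |t| * L ^ γ = |t * L ^ γ| := fun t => by
    rw [abs_mul, _root_.abs_of_pos hLγ]
  rw [habs]
  set Fy : Finset ℕ := (Finset.Icc 1 ⌊Real.sqrt y⌋₊).filter
    (fun q => q.Prime ∧ q % p ^ α = 1 % p ^ α) with hFy_def
  -- facts about members of Fy
  have hmem : ∀ n ∈ Fy, n.Prime ∧ (1:ℝ) ≤ (n:ℝ) ∧ (n:ℝ) ≤ Real.sqrt y := by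
    intro n hn
    rw [hFy_def, Finset.mem_filter, Finset.mem_Icc] at hn
    refine ⟨hn.2.1, by exact_mod_cast hn.1.1, ?_⟩
    calc (n:ℝ) ≤ (⌊Real.sqrt y⌋₊ : ℝ) := by exact_mod_cast hn.1.2
      _ ≤ Real.sqrt y := Nat.floor_le (Real.sqrt_nonneg y)
  have hDfacts : ∀ n ∈ Fy, 0 ≤ Real.log n ∧ Real.log n ≤ L / 2 ∧
      Real.log (y / (n:ℝ)) = L - Real.log n := by
    intro n hn
    obtain ⟨hprime, hn1, hnsq⟩ := hmem n hn
    have hnpos : (0:ℝ) < (n:ℝ) := by linarith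
    refine ⟨Real.log_nonneg hn1, ?_, Real.log_div (ne_of_gt hy0) (ne_of_gt hnpos)⟩
    calc Real.log n ≤ Real.log (Real.sqrt y) := Real.log_le_log hnpos hnsq
      _ = L / 2 := by rw [Real.log_sqrt hy0.le, hL_def]
  -- the product identity
  have hB : loglog y / (((p ^ α).totient : ℝ) * L ^ γ) * L ^ γ =
      loglog y / ((p ^ α).totient : ℝ) := by
    field_simp
  have hA : (∑ n ∈ Fy, 1 / ((n : ℝ) * Real.log (y / (n : ℝ)) ^ γ)) * L ^ γ =
      ∑ n ∈ Fy, (1 / (n:ℝ)) * (L ^ γ / Real.log (y / (n:ℝ)) ^ γ) := by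
    rw [Finset.sum_mul]
    refine Finset.sum_congr rfl fun n hn => ?_
    obtain ⟨hlogn0, hlognL, hDeq⟩ := hDfacts n hn
    obtain ⟨hprime, hn1, _⟩ := hmem n hn
    have hnne : (n:ℝ) ≠ 0 := by linarith
    have hDpos : 0 < Real.log (y / (n:ℝ)) := by rw [hDeq]; linarith
    have hDγ : (0:ℝ) < Real.log (y / (n:ℝ)) ^ γ := Real.rpow_pos_of_pos hDpos γ
    field_simp
  rw [sub_mul, hA, hB]
  set W : ℝ := ∑ n ∈ Fy, (1 / (n:ℝ)) * (L ^ γ / Real.log (y / (n:ℝ)) ^ γ) with hW_def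
  set M : ℝ := loglog y with hM_def
  -- w bounds, needed in both cases
  have hwfacts : ∀ n ∈ Fy, 1 ≤ L ^ γ / Real.log (y / (n:ℝ)) ^ γ ∧
      L ^ γ / Real.log (y / (n:ℝ)) ^ γ ≤ (2:ℝ) ^ γ ∧
      L ^ γ / Real.log (y / (n:ℝ)) ^ γ - 1 ≤
        γ * Real.exp γ * (2 * Real.log n / L) := by
    intro n hn
    obtain ⟨hlogn0, hlognL, hDeq⟩ := hDfacts n hn
    set D : ℝ := Real.log (y / (n:ℝ)) with hD_def
    have hDlb : L / 2 ≤ D := by rw [hDeq]; linarith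
    have hDub : D ≤ L := by rw [hDeq]; linarith
    have hDpos : 0 < D := by linarith
    have hDγpos : (0:ℝ) < D ^ γ := Real.rpow_pos_of_pos hDpos γ
    have hw1 : 1 ≤ L ^ γ / D ^ γ := by
      rw [le_div_iff₀ hDγpos, one_mul]
      exact Real.rpow_le_rpow hDpos.le hDub hγ.le
    have hw2γ : L ^ γ / D ^ γ ≤ (2:ℝ) ^ γ := by
      have h1 : (L/2) ^ γ ≤ D ^ γ := Real.rpow_le_rpow (by linarith) hDlb hγ.le
      have h2 : (L/2) ^ γ = L ^ γ / (2:ℝ) ^ γ := Real.div_rpow hL0.le (by norm_num : (0:ℝ) ≤ 2) γ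
      have h3 : (0:ℝ) < (L/2) ^ γ := Real.rpow_pos_of_pos (by linarith) γ
      rw [div_le_iff₀ hDγpos]
      calc L ^ γ = (L ^ γ / (2:ℝ) ^ γ) * (2:ℝ) ^ γ := by
            field_simp
        _ = (L/2) ^ γ * (2:ℝ) ^ γ := by rw [h2]
        _ ≤ D ^ γ * (2:ℝ) ^ γ := by
            refine mul_le_mul_of_nonneg_right h1 ?_
            positivity
        _ = (2:ℝ) ^ γ * D ^ γ := mul_comm _ _
    -- exponential estimate
    set x : ℝ := γ * (Real.log L - Real.log D) with hx_def
    have hlogDL : Real.log D ≤ Real.log L := Real.log_le_log hDpos hDub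
    have hx0 : 0 ≤ x := by
      rw [hx_def]
      exact mul_nonneg hγ.le (by linarith)
    have hxle : x ≤ γ * (2 * Real.log n / L) := by
      rw [hx_def]
      refine mul_le_mul_of_nonneg_left ?_ hγ.le
      have h1 : Real.log L - Real.log D = Real.log (L / D) :=
        (Real.log_div (ne_of_gt hL0) (ne_of_gt hDpos)).symm
      have h2 : Real.log (L / D) ≤ L / D - 1 :=
        Real.log_le_sub_one_of_pos (by positivity)
      have h3 : L / D - 1 = (L - D) / D := by field_simp
      have h4 : L - D = Real.log n := by rw [hDeq]; ring
      have h5 : (L - D) / D ≤ (L - D) / (L / 2) := by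
        rw [h4]
        refine div_le_div_of_nonneg_left hlogn0 (by linarith) hDlb
      have h6 : (L - D) / (L / 2) = 2 * Real.log n / L := by
        rw [h4]; field_simp
      linarith
    have hxγ : x ≤ γ := by
      have : 2 * Real.log n / L ≤ 1 := by
        rw [div_le_one hL0]; linarith
      calc x ≤ γ * (2 * Real.log n / L) := hxle
        _ ≤ γ * 1 := mul_le_mul_of_nonneg_left this hγ.le
        _ = γ := mul_one γ
    have hw_exp : L ^ γ / D ^ γ = Real.exp x := by
      rw [Real.rpow_def_of_pos hL0, Real.rpow_def_of_pos hDpos, ← Real.exp_sub, hx_def]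
      congr 1
      ring
    have hexp_est : Real.exp x - 1 ≤ x * Real.exp γ := by
      have h1 : 1 - x ≤ Real.exp (-x) := by linarith [Real.add_one_le_exp (-x)]
      have h2 : Real.exp x * (1 - x) ≤ Real.exp x * Real.exp (-x) :=
        mul_le_mul_of_nonneg_left h1 (Real.exp_pos x).le
      rw [← Real.exp_add, add_neg_cancel, Real.exp_zero] at h2
      have h3 : Real.exp x - 1 ≤ x * Real.exp x := by nlinarith [Real.exp_pos x]
      have h4 : x * Real.exp x ≤ x * Real.exp γ :=
        mul_le_mul_of_nonneg_left (Real.exp_le_exp.mpr hxγ) hx0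
      linarith
    refine ⟨hw1, hw2γ, ?_⟩
    rw [hw_exp]
    calc Real.exp x - 1 ≤ x * Real.exp γ := hexp_est
      _ ≤ γ * (2 * Real.log n / L) * Real.exp γ :=
          mul_le_mul_of_nonneg_right hxle (Real.exp_pos γ).le
      _ = γ * Real.exp γ * (2 * Real.log n / L) := by ring
  rcases le_or_gt 9 y with hy9 | hy9
  · -- main case
    have hsq3 : (3:ℝ) ≤ Real.sqrt y := by
      have h9 : Real.sqrt 9 = 3 := by
        rw [show (9:ℝ) = 3^2 by norm_num, Real.sqrt_sq (by norm_num : (0:ℝ) ≤ 3)]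
      rw [← h9]
      exact Real.sqrt_le_sqrt hy9
    have hlogsq : Real.log (Real.sqrt y) = L / 2 := by
      rw [Real.log_sqrt hy0.le, hL_def]
    -- identify the finsets
    have hFeq : Fy = (Finset.Icc 1 ⌊Real.sqrt y⌋₊).filter
        (fun n : ℕ => n.Prime ∧ (n : ZMod (p ^ α)) = 1) := by
      rw [hFy_def]
      refine Finset.filter_congr fun n _ => ?_
      constructor
      · rintro ⟨h1, h2⟩
        refine ⟨h1, ?_⟩
        have := (ZMod.natCast_eq_natCast_iff n 1 (p ^ α)).mpr h2
        simpa using this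
      · rintro ⟨h1, h2⟩
        refine ⟨h1, ?_⟩
        have : ((n:ℕ) : ZMod (p ^ α)) = ((1:ℕ) : ZMod (p ^ α)) := by simpa using h2
        exact (ZMod.natCast_eq_natCast_iff n 1 (p ^ α)).mp this
    have hS := hCM (Real.sqrt y) hsq3
    rw [← hFeq, hlogsq] at hS
    -- split W
    have hWsplit : W = (∑ n ∈ Fy, 1 / (n:ℝ)) +
        ∑ n ∈ Fy, (1 / (n:ℝ)) * (L ^ γ / Real.log (y / (n:ℝ)) ^ γ - 1) := by
      rw [hW_def, ← Finset.sum_add_distrib]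
      refine Finset.sum_congr rfl fun n hn => ?_
      ring
    set S : ℝ := ∑ n ∈ Fy, 1 / (n:ℝ) with hS_def
    set E : ℝ := ∑ n ∈ Fy, (1 / (n:ℝ)) * (L ^ γ / Real.log (y / (n:ℝ)) ^ γ - 1) with hE_def
    have hE0 : 0 ≤ E := by
      rw [hE_def]
      refine Finset.sum_nonneg fun n hn => ?_
      obtain ⟨hw1, _, _⟩ := hwfacts n hn
      obtain ⟨_, hn1, _⟩ := hmem n hn
      have : (0:ℝ) < (n:ℝ) := by linarith
      have h1 : (0:ℝ) ≤ 1 / (n:ℝ) := by positivity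
      exact mul_nonneg h1 (by linarith)
    have hEbound : E ≤ γ * Real.exp γ * C₁ := by
      have h1 : E ≤ ∑ n ∈ Fy, (2 * γ * Real.exp γ / L) * (Real.log n / (n:ℝ)) := by
        rw [hE_def]
        refine Finset.sum_le_sum fun n hn => ?_
        obtain ⟨_, _, hw3⟩ := hwfacts n hn
        obtain ⟨_, hn1, _⟩ := hmem n hn
        obtain ⟨hlogn0, _, _⟩ := hDfacts n hn
        have hnpos : (0:ℝ) < (n:ℝ) := by linarith
        have h2 : (1:ℝ) / (n:ℝ) ≤ 1 := by
          rw [div_le_one hnpos]; exact hn1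
        have h3 : 0 ≤ L ^ γ / Real.log (y / (n:ℝ)) ^ γ - 1 := by
          obtain ⟨hw1, _, _⟩ := hwfacts n hn
          linarith
        calc (1 / (n:ℝ)) * (L ^ γ / Real.log (y / (n:ℝ)) ^ γ - 1)
            ≤ (1 / (n:ℝ)) * (γ * Real.exp γ * (2 * Real.log n / L)) := by
              refine mul_le_mul_of_nonneg_left hw3 (by positivity)
          _ = (2 * γ * Real.exp γ / L) * (Real.log n / (n:ℝ)) := by
              field_simp
      have h2 : ∑ n ∈ Fy, (Real.log n / (n:ℝ)) ≤
          ∑ n ∈ (Finset.Icc 1 ⌊Real.sqrt y⌋₊).filter Nat.Prime, (Real.log n / (n:ℝ)) := by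
        refine Finset.sum_le_sum_of_subset_of_nonneg ?_ ?_
        · rw [hFy_def]
          intro x hx
          rw [Finset.mem_filter] at hx ⊢
          exact ⟨hx.1, hx.2.1⟩
        · intro n hn _
          rw [Finset.mem_filter, Finset.mem_Icc] at hn
          have hn1 : (1:ℝ) ≤ (n:ℝ) := by exact_mod_cast hn.1.1
          have : 0 ≤ Real.log n := Real.log_nonneg hn1
          positivity
      have h3 := hC₁ (Real.sqrt y) hsq3
      rw [hlogsq] at h3
      have h4 : ∑ n ∈ Fy, (2 * γ * Real.exp γ / L) * (Real.log n / (n:ℝ)) =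
          (2 * γ * Real.exp γ / L) * ∑ n ∈ Fy, (Real.log n / (n:ℝ)) := by
        rw [Finset.mul_sum]
      have h5 : (0:ℝ) ≤ 2 * γ * Real.exp γ / L := by positivity
      calc E ≤ (2 * γ * Real.exp γ / L) * ∑ n ∈ Fy, (Real.log n / (n:ℝ)) := by
            rw [← h4]; exact h1
        _ ≤ (2 * γ * Real.exp γ / L) * (C₁ * (L / 2)) := by
            refine mul_le_mul_of_nonneg_left (le_trans h2 h3) h5
        _ = γ * Real.exp γ * C₁ := by
            field_simp
    -- M = log L
    have hMeq : M = Real.log L := by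
      rw [hM_def, loglog, max_eq_left (by linarith : (3:ℝ) ≤ y), hL_def]
    -- bound |S - M/φ|
    have hSM : |S - M / ((p ^ α).totient : ℝ)| ≤ CM + Real.log 2 := by
      have hlogL2 : Real.log (L / 2) = Real.log L - Real.log 2 :=
        Real.log_div (ne_of_gt hL0) (by norm_num)
      have hc1 : ((p ^ α).totient : ℝ)⁻¹ ≤ 1 := by
        rw [inv_le_one_iff₀]; right; exact hφ1
      have hc0 : (0:ℝ) ≤ ((p ^ α).totient : ℝ)⁻¹ := by positivity
      have heq : S - M / ((p ^ α).totient : ℝ) =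
          (S - ((p ^ α).totient : ℝ)⁻¹ * Real.log (L / 2)) -
            ((p ^ α).totient : ℝ)⁻¹ * Real.log 2 := by
        rw [hMeq, hlogL2, div_eq_inv_mul]
        ring
      rw [heq]
      have h2 : |((p ^ α).totient : ℝ)⁻¹ * Real.log 2| ≤ Real.log 2 := by
        rw [abs_mul, _root_.abs_of_nonneg hc0, _root_.abs_of_nonneg hlog2]
        nlinarith
      calc |(S - ((p ^ α).totient : ℝ)⁻¹ * Real.log (L / 2)) -
            ((p ^ α).totient : ℝ)⁻¹ * Real.log 2|
          ≤ |S - ((p ^ α).totient : ℝ)⁻¹ * Real.log (L / 2)| +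
            |((p ^ α).totient : ℝ)⁻¹ * Real.log 2| := abs_sub _ _
        _ ≤ CM + Real.log 2 := add_le_add hS h2
    -- assemble
    rw [hWsplit]
    have habs2 : |S + E - M / ((p ^ α).totient : ℝ)| ≤
        |S - M / ((p ^ α).totient : ℝ)| + E := by
      have := abs_add_le (S - M / ((p ^ α).totient : ℝ)) E
      have he : S + E - M / ((p ^ α).totient : ℝ) =
          (S - M / ((p ^ α).totient : ℝ)) + E := by ring
      rw [he]
      calc |(S - M / ((p ^ α).totient : ℝ)) + E| ≤
          |S - M / ((p ^ α).totient : ℝ)| + |E| := abs_add_le _ _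
        _ = |S - M / ((p ^ α).totient : ℝ)| + E := by
            rw [_root_.abs_of_nonneg hE0]
    calc |S + E - M / ((p ^ α).totient : ℝ)|
        ≤ |S - M / ((p ^ α).totient : ℝ)| + E := habs2
      _ ≤ (CM + Real.log 2) + γ * Real.exp γ * C₁ := add_le_add hSM hEbound
      _ ≤ C := by
          rw [hC_def]
          have h4 : (0:ℝ) ≤ 2 * (2:ℝ)^γ := by positivity
          linarith
  · -- small case 2 ≤ y < 9
    have hW0 : 0 ≤ W := by
      rw [hW_def]
      refine Finset.sum_nonneg fun n hn => ?_
      obtain ⟨hw1, _, _⟩ := hwfacts n hn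
      obtain ⟨_, hn1, _⟩ := hmem n hn
      have : (0:ℝ) < (n:ℝ) := by linarith
      have h1 : (0:ℝ) ≤ 1 / (n:ℝ) := by positivity
      exact mul_nonneg h1 (by linarith)
    have hWle : W ≤ 2 * (2:ℝ)^γ := by
      have hcard : Fy.card ≤ 2 := by
        have h1 : Fy.card ≤ (Finset.Icc 1 ⌊Real.sqrt y⌋₊).card := by
          rw [hFy_def]; exact Finset.card_filter_le _ _
        have h2 : (Finset.Icc 1 ⌊Real.sqrt y⌋₊).card = ⌊Real.sqrt y⌋₊ := by
          rw [Nat.card_Icc]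
          omega
        have h3 : ⌊Real.sqrt y⌋₊ < 3 := by
          rw [Nat.floor_lt (Real.sqrt_nonneg y)]
          have h9 : Real.sqrt 9 = 3 := by
            rw [show (9:ℝ) = 3^2 by norm_num, Real.sqrt_sq (by norm_num : (0:ℝ) ≤ 3)]
          have h10 : Real.sqrt y < 3 := by
            calc Real.sqrt y < Real.sqrt 9 := Real.sqrt_lt_sqrt hy0.le hy9
              _ = 3 := h9
          exact_mod_cast h10
        omega
      have hterm : ∀ n ∈ Fy, (1 / (n:ℝ)) * (L ^ γ / Real.log (y / (n:ℝ)) ^ γ) ≤ (2:ℝ)^γ := by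
        intro n hn
        obtain ⟨hw1, hw2, _⟩ := hwfacts n hn
        obtain ⟨_, hn1, _⟩ := hmem n hn
        have hnpos : (0:ℝ) < (n:ℝ) := by linarith
        have h2 : (1:ℝ) / (n:ℝ) ≤ 1 := by rw [div_le_one hnpos]; exact hn1
        have h3 : (0:ℝ) ≤ L ^ γ / Real.log (y / (n:ℝ)) ^ γ := by linarith
        calc (1 / (n:ℝ)) * (L ^ γ / Real.log (y / (n:ℝ)) ^ γ)
            ≤ 1 * (L ^ γ / Real.log (y / (n:ℝ)) ^ γ) :=
              mul_le_mul_of_nonneg_right h2 h3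
          _ = L ^ γ / Real.log (y / (n:ℝ)) ^ γ := one_mul _
          _ ≤ (2:ℝ)^γ := hw2
      calc W ≤ Fy.card • ((2:ℝ)^γ) := Finset.sum_le_card_nsmul Fy _ _ hterm
        _ = (Fy.card : ℝ) * (2:ℝ)^γ := by rw [nsmul_eq_mul]
        _ ≤ 2 * (2:ℝ)^γ := by
            have hc2 : (Fy.card : ℝ) ≤ 2 := by exact_mod_cast hcard
            have h4 : (0:ℝ) ≤ (2:ℝ)^γ := by positivity
            exact mul_le_mul_of_nonneg_right hc2 h4
    have hM0 : 0 ≤ M := by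
      rw [hM_def, loglog]
      refine Real.log_nonneg ?_
      rw [Real.le_log_iff_exp_le (by positivity)]
      calc Real.exp 1 ≤ 3 := hexp3
        _ ≤ max y 3 := le_max_right y 3
    have hMle : M ≤ Real.log (Real.log 9) := by
      rw [hM_def, loglog]
      have h1 : Real.log (max y 3) ≤ Real.log 9 := by
        refine Real.log_le_log (by positivity) ?_
        exact max_le (by linarith) (by norm_num)
      have h2 : 0 < Real.log (max y 3) := by
        refine Real.log_pos ?_
        calc (1:ℝ) < 3 := by norm_num
          _ ≤ max y 3 := le_max_right y 3
      exact Real.log_le_log h2 h1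
    have hMφ : M / ((p ^ α).totient : ℝ) ≤ Real.log (Real.log 9) := by
      calc M / ((p ^ α).totient : ℝ) ≤ M / 1 := by
            refine div_le_div_of_nonneg_left hM0 (by norm_num) hφ1
        _ = M := div_one M
        _ ≤ Real.log (Real.log 9) := hMle
    have hMφ0 : 0 ≤ M / ((p ^ α).totient : ℝ) := by positivity
    calc |W - M / ((p ^ α).totient : ℝ)| ≤ |W| + |M / ((p ^ α).totient : ℝ)| := abs_sub _ _
      _ = W + M / ((p ^ α).totient : ℝ) := by
          rw [_root_.abs_of_nonneg hW0, _root_.abs_of_nonneg hMφ0]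
      _ ≤ 2 * (2:ℝ)^γ + Real.log (Real.log 9) := add_le_add hWle hMφ
      _ ≤ C := by
          rw [hC_def]
          have h3 : 0 ≤ γ * Real.exp γ * C₁ := by positivity
          linarith
end

section
/- For every integer j ≥ 1 there exists a constant C > 0 such that for all real y ≥ 3, the number of ordered j-tuples (p₁, …, p_j) of prime numbers satisfying y/2 < p₁·p₂⋯p_j ≤ y is at most C·y·(log₂y)^{j−1}/log y. -/
open Finset Real

lemma one_lt_log_three : 1 < Real.log 3 := by
  rw [Real.lt_log_iff_exp_lt (by norm_num)]
  calc Real.exp 1 < 2.7182818286 := Real.exp_one_lt_d9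
    _ < 3 := by norm_num

lemma loglog_pos (x : ℝ) : 0 < loglog x := by
  unfold loglog
  apply Real.log_pos
  calc (1:ℝ) < Real.log 3 := one_lt_log_three
    _ ≤ Real.log (max x 3) := Real.log_le_log (by norm_num) (le_max_right _ _)

lemma loglog_mono {x y : ℝ} (h : x ≤ y) : loglog x ≤ loglog y := by
  unfold loglog
  have h3 : (0:ℝ) < max x 3 := lt_of_lt_of_le (by norm_num) (le_max_right _ _)
  apply Real.log_le_log
  · exact lt_trans one_pos (lt_of_lt_of_le one_lt_log_three
      (Real.log_le_log (by norm_num) (le_max_right _ _)))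
  · exact Real.log_le_log h3 (max_le_max_right 3 h)

lemma loglog_eq {y : ℝ} (hy : 3 ≤ y) : loglog y = Real.log (Real.log y) := by
  unfold loglog; rw [max_eq_left hy]

lemma loglog_three_pos : 0 < loglog 3 := loglog_pos 3

-- dyadic prime count
lemma dyadic_count (k : ℕ) :
    k * ((Finset.Ico (2^k) (2^(k+1))).filter Nat.Prime).card ≤ 2^(k+2) := by
  set D := (Finset.Ico (2^k) (2^(k+1))).filter Nat.Prime with hD
  have hsub : D ⊆ (Finset.range (2^(k+1) + 1)).filter Nat.Prime := by
    intro p hp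
    simp only [hD, mem_filter, mem_Ico, mem_range] at hp ⊢
    exact ⟨by omega, hp.2⟩
  have hprod : (2:ℕ) ^ (k * D.card) ≤ 2 ^ (2^(k+2)) := by
    calc (2:ℕ) ^ (k * D.card) = ∏ _p ∈ D, 2^k := by
          rw [Finset.prod_const, ← pow_mul]
      _ ≤ ∏ p ∈ D, p := by
          apply Finset.prod_le_prod'
          intro p hp
          simp only [hD, mem_filter, mem_Ico] at hp
          exact hp.1.1
      _ ≤ ∏ p ∈ (Finset.range (2^(k+1) + 1)).filter Nat.Prime, p := by
          apply Finset.prod_le_prod_of_subset_of_one_le' hsub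
          intro p hp _
          exact (Finset.mem_filter.mp hp).2.one_lt.le
      _ ≤ 4 ^ (2^(k+1)) := primorial_le_4_pow _
      _ = 2 ^ (2^(k+2)) := by
          rw [show (4:ℕ) = 2^2 by norm_num, ← pow_mul, pow_succ]
          ring_nf
  exact (Nat.pow_le_pow_iff_right one_lt_two).mp hprod

-- harmonic-type bound
lemma harm_bound : ∀ K : ℕ, ∑ k ∈ Finset.Icc 1 K, (1 / k : ℝ) ≤ 1 + Real.log K := by
  intro K
  induction K with
  | zero => simp
  | succ K ih =>
    rw [Finset.sum_Icc_succ_top (by omega)]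
    rcases Nat.eq_zero_or_pos K with hK | hK
    · subst hK; simp
    · have hlog : (1:ℝ)/(K+1) ≤ Real.log (K+1) - Real.log K := by
        rw [← Real.log_div (by positivity) (by positivity)]
        have h2 : (1:ℝ) - 1/(K+1) ≤ Real.exp (-(1/(K+1))) := by
          have := Real.add_one_le_exp (-(1/(K+1) : ℝ))
          linarith
        have hKpos : (0:ℝ) < K := by exact_mod_cast hK
        have h3 : (K:ℝ)/(K+1) ≤ Real.exp (-(1/(K+1))) := by
          have : (K:ℝ)/(K+1) = 1 - 1/(K+1) := by field_simp; ring
          linarith [h2, this.le]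
        have h4 : Real.log ((K:ℝ)/(K+1)) ≤ -(1/(K+1)) := by
          calc Real.log ((K:ℝ)/(K+1)) ≤ Real.log (Real.exp (-(1/(K+1)))) :=
                Real.log_le_log (by positivity) h3
            _ = -(1/(K+1)) := Real.log_exp _
        have h5 : Real.log ((K+1:ℝ)/K) = - Real.log ((K:ℝ)/(K+1)) := by
          rw [← Real.log_inv]; congr 1; field_simp
        rw [h5]; linarith
      push_cast
      push_cast at ih hlog
      linarith

lemma mertens_nat (n : ℕ) (hn : 2 ≤ n) :
    ∑ p ∈ (Finset.range (n+1)).filter Nat.Prime, (1 / p : ℝ) ≤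
      4 * (1 + Real.log (Nat.log 2 n)) := by
  set K := Nat.log 2 n with hK
  set D : ℕ → Finset ℕ := fun k => (Finset.Ico (2^k) (2^(k+1))).filter Nat.Prime with hDdef
  have hdisj : (Finset.Icc 1 K : Set ℕ).PairwiseDisjoint D := by
    intro k _ l _ hkl
    apply Finset.disjoint_left.mpr
    intro p hpk hpl
    simp only [hDdef, mem_filter, mem_Ico] at hpk hpl
    rcases Nat.lt_or_ge k l with h | h
    · have : 2^(k+1) ≤ 2^l := Nat.pow_le_pow_right (by norm_num) h
      omega
    · have hlk : l < k := lt_of_le_of_ne h (fun e => hkl e.symm)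
      have : 2^(l+1) ≤ 2^k := Nat.pow_le_pow_right (by norm_num) hlk
      omega
  have hsub : (Finset.range (n+1)).filter Nat.Prime ⊆ (Finset.Icc 1 K).biUnion D := by
    intro p hp
    simp only [mem_filter, mem_range] at hp
    obtain ⟨hpn, hpp⟩ := hp
    have hp2 : 2 ≤ p := hpp.two_le
    have hp0 : p ≠ 0 := by omega
    refine Finset.mem_biUnion.mpr ⟨Nat.log 2 p, ?_, ?_⟩
    · rw [Finset.mem_Icc]
      constructor
      · calc 1 ≤ Nat.log 2 2 := Nat.log_pos (by norm_num) (le_refl 2)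
          _ ≤ Nat.log 2 p := Nat.log_mono_right hp2
      · exact Nat.log_mono_right (by omega)
    · simp only [hDdef, mem_filter, mem_Ico]
      exact ⟨⟨Nat.pow_log_le_self 2 hp0, Nat.lt_pow_succ_log_self (by norm_num) p⟩, hpp⟩
  calc ∑ p ∈ (Finset.range (n+1)).filter Nat.Prime, (1 / p : ℝ)
      ≤ ∑ p ∈ (Finset.Icc 1 K).biUnion D, (1 / p : ℝ) := by
        apply Finset.sum_le_sum_of_subset_of_nonneg hsub
        intro p _ _; positivity
    _ = ∑ k ∈ Finset.Icc 1 K, ∑ p ∈ D k, (1 / p : ℝ) := Finset.sum_biUnion hdisj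
    _ ≤ ∑ k ∈ Finset.Icc 1 K, (4 / k : ℝ) := by
        apply Finset.sum_le_sum
        intro k hk
        rw [Finset.mem_Icc] at hk
        have hk1 : 1 ≤ k := hk.1
        have hcard : ((D k).card : ℝ) ≤ 2^(k+2) / k := by
          rw [le_div_iff₀ (by positivity : (0:ℝ) < (k:ℝ))]
          have := dyadic_count k
          calc ((D k).card : ℝ) * k = ((k * (D k).card : ℕ) : ℝ) := by push_cast; ring
            _ ≤ ((2^(k+2) : ℕ) : ℝ) := by exact_mod_cast this
            _ = 2^(k+2) := by push_cast; ring
        calc ∑ p ∈ D k, (1 / p : ℝ) ≤ ∑ _p ∈ D k, (1 / 2^k : ℝ) := by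
              apply Finset.sum_le_sum
              intro p hp
              simp only [hDdef, mem_filter, mem_Ico] at hp
              apply one_div_le_one_div_of_le (by positivity)
              exact_mod_cast hp.1.1
          _ = (D k).card * (1/2^k : ℝ) := by rw [Finset.sum_const, nsmul_eq_mul]
          _ ≤ (2^(k+2)/k) * (1/2^k : ℝ) := by
              apply mul_le_mul_of_nonneg_right hcard (by positivity)
          _ = 4 / k := by
              rw [pow_add]; field_simp; ring
    _ = 4 * ∑ k ∈ Finset.Icc 1 K, (1 / k : ℝ) := by
        rw [Finset.mul_sum]; apply Finset.sum_congr rfl; intros; ring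
    _ ≤ 4 * (1 + Real.log K) := by
        have := harm_bound K
        linarith

lemma mertens : ∃ C : ℝ, 0 < C ∧ ∀ y : ℝ, 3 ≤ y →
    ∑ p ∈ (Finset.range (⌊y⌋₊+1)).filter Nat.Prime, (1 / p : ℝ) ≤ C * loglog y := by
  have hll3 : 0 < loglog 3 := loglog_pos 3
  refine ⟨(4 + 4 * Real.log 4) / loglog 3 + 4, by positivity, ?_⟩
  intro y hy
  set n := ⌊y⌋₊ with hn
  have hn3 : 3 ≤ n := Nat.le_floor (by exact_mod_cast hy)
  have hny : (n : ℝ) ≤ y := Nat.floor_le (by linarith)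
  set K := Nat.log 2 n with hK
  have hK1 : 1 ≤ K := by
    calc 1 ≤ Nat.log 2 2 := Nat.log_pos (by norm_num) (le_refl 2)
      _ ≤ K := Nat.log_mono_right (by omega)
  have hlogy : 1 < Real.log y := by
    calc (1:ℝ) < Real.log 3 := one_lt_log_three
      _ ≤ Real.log y := Real.log_le_log (by norm_num) hy
  -- K ≤ 4 * log y
  have hKle : (K : ℝ) ≤ 4 * Real.log y := by
    have h2K : (2:ℝ)^K ≤ y := by
      have h1 : ((2^K : ℕ) : ℝ) ≤ (n : ℝ) := by exact_mod_cast Nat.pow_log_le_self 2 (by omega)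
      push_cast at h1
      linarith
    have := Real.log_le_log (by positivity) h2K
    rw [Real.log_pow] at this
    have hlog2 : (0.6931471803 : ℝ) < Real.log 2 := Real.log_two_gt_d9
    nlinarith [this, hlog2, (Nat.cast_nonneg K : (0:ℝ) ≤ K)]
  have hlogK : Real.log K ≤ Real.log 4 + loglog y := by
    rw [loglog_eq hy]
    calc Real.log K ≤ Real.log (4 * Real.log y) :=
          Real.log_le_log (by exact_mod_cast hK1) hKle
      _ = Real.log 4 + Real.log (Real.log y) :=
          Real.log_mul (by norm_num) (by linarith)
  have hll : loglog 3 ≤ loglog y := loglog_mono hy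
  calc ∑ p ∈ (Finset.range (n+1)).filter Nat.Prime, (1 / p : ℝ)
      ≤ 4 * (1 + Real.log K) := mertens_nat n (by omega)
    _ ≤ 4 + 4 * Real.log 4 + 4 * loglog y := by linarith
    _ ≤ ((4 + 4 * Real.log 4) / loglog 3) * loglog y + 4 * loglog y := by
        have h4 : (0:ℝ) ≤ 4 + 4 * Real.log 4 := by
          have : (0:ℝ) ≤ Real.log 4 := Real.log_nonneg (by norm_num)
          linarith
        have : 4 + 4 * Real.log 4 = ((4 + 4*Real.log 4)/loglog 3) * loglog 3 := by
          field_simp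
        nlinarith [mul_le_mul_of_nonneg_left hll (by positivity : (0:ℝ) ≤ (4 + 4*Real.log 4)/loglog 3)]
    _ = ((4 + 4 * Real.log 4) / loglog 3 + 4) * loglog y := by ring

open scoped Classical in
noncomputable def Tset (j : ℕ) (y : ℝ) : Finset (Fin j → ℕ) :=
  (Fintype.piFinset fun _ : Fin j => Finset.range (⌊y⌋₊ + 1)).filter
    (fun t => (∀ i, (t i).Prime) ∧ y/2 < ((∏ i, t i : ℕ):ℝ) ∧ ((∏ i, t i : ℕ):ℝ) ≤ y)

lemma mem_Tset {j : ℕ} {y : ℝ} (hy : 0 ≤ y) (t : Fin j → ℕ) :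
    t ∈ Tset j y ↔ (∀ i, (t i).Prime) ∧ y/2 < ((∏ i, t i : ℕ):ℝ) ∧ ((∏ i, t i : ℕ):ℝ) ≤ y := by
  classical
  unfold Tset
  rw [Finset.mem_filter]
  constructor
  · rintro ⟨_, h⟩; exact h
  · intro h
    refine ⟨?_, h⟩
    rw [Fintype.mem_piFinset]
    intro i
    rw [Finset.mem_range, Nat.lt_succ_iff]
    apply Nat.le_floor
    calc ((t i : ℕ) : ℝ) ≤ ((∏ i', t i' : ℕ) : ℝ) := by
          exact_mod_cast Finset.single_le_prod' (f := t) (fun i' _ => (h.1 i').one_lt.le) (Finset.mem_univ i)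
      _ ≤ y := h.2.2

lemma natcard_eq_Tset (j : ℕ) (y : ℝ) (hy : 0 ≤ y) :
    Nat.card {t : Fin j → ℕ // (∀ i, (t i).Prime) ∧
        y / 2 < ((∏ i, t i : ℕ) : ℝ) ∧ ((∏ i, t i : ℕ) : ℝ) ≤ y} = (Tset j y).card := by
  have hset : {t : Fin j → ℕ | (∀ i, (t i).Prime) ∧
      y / 2 < ((∏ i, t i : ℕ) : ℝ) ∧ ((∏ i, t i : ℕ) : ℝ) ≤ y} = ↑(Tset j y) := by
    ext t
    simp only [Set.mem_setOf_eq, Finset.coe_filter, Finset.mem_coe]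
    exact (mem_Tset hy t).symm
  calc Nat.card {t : Fin j → ℕ // (∀ i, (t i).Prime) ∧
        y / 2 < ((∏ i, t i : ℕ) : ℝ) ∧ ((∏ i, t i : ℕ) : ℝ) ≤ y}
      = Set.ncard {t : Fin j → ℕ | (∀ i, (t i).Prime) ∧
        y / 2 < ((∏ i, t i : ℕ) : ℝ) ∧ ((∏ i, t i : ℕ) : ℝ) ≤ y} := Nat.card_coe_set_eq _
    _ = (Tset j y).card := by rw [hset, Set.ncard_coe_finset]

-- prime counting in (y/2, y]
lemma cheby (y : ℝ) (hy : 3 ≤ y) :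
    ((Tset 1 y).card : ℝ) ≤ (2 * Real.log 4) * y / Real.log y := by
  classical
  have hy0 : (0:ℝ) ≤ y := by linarith
  have hlogy : 1 < Real.log y := lt_of_lt_of_le one_lt_log_three
    (Real.log_le_log (by norm_num) hy)
  set n := ⌊y⌋₊ with hn
  have hny : (n : ℝ) ≤ y := Nat.floor_le hy0
  set Q : Finset ℕ := (Finset.range (n+1)).filter (fun p => p.Prime ∧ y/2 < (p:ℝ)) with hQ
  -- injection
  have hcard : (Tset 1 y).card ≤ Q.card := by
    apply Finset.card_le_card_of_injOn (fun t => t 0)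
    · intro t ht
      rw [Finset.mem_coe, mem_Tset hy0] at ht
      obtain ⟨hp, hlt, hle⟩ := ht
      have hprod : (∏ i, t i) = t 0 := by simp [Fin.prod_univ_one]
      rw [hprod] at hlt hle
      simp only [hQ, Finset.mem_coe, mem_filter, mem_range, Nat.lt_succ_iff]
      exact ⟨Nat.le_floor hle, hp 0, hlt⟩
    · intro t _ t' _ h
      funext i
      rw [Fin.eq_zero i]
      exact h
  -- bound Q.card
  have hlogp : ∀ p ∈ Q, Real.log y / 2 ≤ Real.log p := by
    intro p hp
    simp only [hQ, mem_filter] at hp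
    obtain ⟨_, hpp, hpy⟩ := hp
    have hp2 : (2:ℝ) ≤ p := by exact_mod_cast hpp.two_le
    have hsq : y < (p:ℝ)^2 := by nlinarith
    have := Real.log_le_log (by linarith) hsq.le
    rw [Real.log_pow] at this
    push_cast at this
    linarith
  have hsum : Q.card * (Real.log y / 2) ≤ ∑ p ∈ Q, Real.log p := by
    calc (Q.card : ℝ) * (Real.log y / 2) = ∑ _p ∈ Q, (Real.log y / 2) := by
          rw [Finset.sum_const, nsmul_eq_mul]
      _ ≤ ∑ p ∈ Q, Real.log p := Finset.sum_le_sum hlogp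
  have hsum2 : ∑ p ∈ Q, Real.log p ≤ y * Real.log 4 := by
    have h1 : ∑ p ∈ Q, Real.log p = Real.log ((∏ p ∈ Q, p : ℕ) : ℝ) := by
      push_cast
      rw [Real.log_prod]
      intro p hp
      simp only [hQ, mem_filter] at hp
      exact_mod_cast hp.2.1.pos.ne'
    have h2 : (∏ p ∈ Q, p) ≤ 4 ^ n := by
      calc (∏ p ∈ Q, p) ≤ ∏ p ∈ (Finset.range (n+1)).filter Nat.Prime, p := by
            apply Finset.prod_le_prod_of_subset_of_one_le'
            · intro p hp
              simp only [hQ, mem_filter] at hp ⊢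
              exact ⟨hp.1, hp.2.1⟩
            · intro p hp _
              exact (Finset.mem_filter.mp hp).2.one_lt.le
        _ ≤ 4 ^ n := primorial_le_4_pow n
    rw [h1]
    have hQpos : (0:ℝ) < ((∏ p ∈ Q, p : ℕ) : ℝ) := by
      have : 0 < ∏ p ∈ Q, p := by
        apply Finset.prod_pos
        intro p hp
        exact (Finset.mem_filter.mp hp).2.1.pos
      exact_mod_cast this
    calc Real.log ((∏ p ∈ Q, p : ℕ) : ℝ) ≤ Real.log ((4:ℝ)^n) := by
          apply Real.log_le_log hQpos
          exact_mod_cast h2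
      _ = n * Real.log 4 := by rw [Real.log_pow]
      _ ≤ y * Real.log 4 := by
          apply mul_le_mul_of_nonneg_right hny (Real.log_nonneg (by norm_num))
  have hQcard : (Q.card : ℝ) ≤ (2 * Real.log 4) * y / Real.log y := by
    have hlp : (0:ℝ) < Real.log y := by linarith
    rw [le_div_iff₀ hlp]
    nlinarith
  calc ((Tset 1 y).card : ℝ) ≤ (Q.card : ℝ) := by exact_mod_cast hcard
    _ ≤ _ := hQcard

set_option maxHeartbeats 1000000 in
lemma key : ∀ j : ℕ, 1 ≤ j → ∃ C : ℝ, 0 < C ∧ ∀ y : ℝ, 3 ≤ y →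
    ((Tset j y).card : ℝ) ≤ C * y * loglog y ^ ((j : ℝ) - 1) / Real.log y := by
  classical
  obtain ⟨CM, hCM, hM⟩ := mertens
  intro j hj
  induction j, hj using Nat.le_induction with
  | base =>
    refine ⟨2 * Real.log 4, by positivity, ?_⟩
    intro y hy
    have : ((1:ℕ):ℝ) - 1 = 0 := by norm_num
    rw [this, Real.rpow_zero]
    calc ((Tset 1 y).card : ℝ) ≤ (2 * Real.log 4) * y / Real.log y := cheby y hy
      _ = 2 * Real.log 4 * y * 1 / Real.log y := by ring
  | succ k hk IH =>
    obtain ⟨Ck, hCk, hIH⟩ := IH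
    have hε : (0:ℝ) < loglog 3 ^ (((k:ℝ)+1) - 1) := Real.rpow_pos_of_pos (loglog_pos 3) _
    set ε := loglog 3 ^ (((k:ℝ)+1) - 1) with hεdef
    set Cs : ℝ := 9^(k+1) * Real.log 9 / (3 * ε) with hCs
    have hCspos : 0 < Cs := by
      apply div_pos (by positivity)
      positivity
    refine ⟨Cs + 2 * (k+1) * Ck * CM, by positivity, ?_⟩
    intro y hy
    have hy0 : (0:ℝ) < y := by linarith
    have hlogy : 1 < Real.log y := lt_of_lt_of_le one_lt_log_three
      (Real.log_le_log (by norm_num) hy)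
    have hexp : ((k:ℝ) + 1) - 1 = (((k+1:ℕ)):ℝ) - 1 := by push_cast; ring
    have hexpnn : (0:ℝ) ≤ (k:ℝ) - 1 := by
      have : (1:ℝ) ≤ (k:ℝ) := by exact_mod_cast hk
      linarith
    have hWpos : 0 < loglog y ^ (((k+1:ℕ)):ℝ) - 1 ∨ True := Or.inr trivial
    rcases lt_or_ge y 9 with hy9 | hy9
    · -- small case
      have hcard : ((Tset (k+1) y).card : ℝ) ≤ 9^(k+1) := by
        have h1 : (Tset (k+1) y).card ≤
            (Fintype.piFinset fun _ : Fin (k+1) => Finset.range (⌊y⌋₊ + 1)).card :=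
          Finset.card_le_card (Finset.filter_subset _ _)
        have h2 : (Fintype.piFinset fun _ : Fin (k+1) => Finset.range (⌊y⌋₊ + 1)).card
            = (⌊y⌋₊ + 1)^(k+1) := by
          rw [Fintype.card_piFinset]
          simp [Finset.card_range]
        have h3 : ⌊y⌋₊ + 1 ≤ 9 := by
          have h4 : (⌊y⌋₊ : ℝ) ≤ y := Nat.floor_le hy0.le
          have h5 : (⌊y⌋₊ : ℝ) < 9 := lt_of_le_of_lt h4 hy9
          have h6 : ⌊y⌋₊ < 9 := by exact_mod_cast h5
          omega
        calc ((Tset (k+1) y).card : ℝ) ≤ (((⌊y⌋₊ + 1)^(k+1) : ℕ) : ℝ) := by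
              exact_mod_cast h1.trans_eq h2
          _ ≤ ((9^(k+1) : ℕ) : ℝ) := by
              exact_mod_cast Nat.pow_le_pow_left h3 (k+1)
          _ = 9^(k+1) := by push_cast; ring
      have hll : ε ≤ loglog y ^ ((((k+1:ℕ)):ℝ) - 1) := by
        rw [← hexp]
        exact Real.rpow_le_rpow (loglog_pos 3).le (loglog_mono hy) (by linarith)
      have hL9 : Real.log y ≤ Real.log 9 := Real.log_le_log hy0 hy9.le
      have heq : Cs * 3 * ε / Real.log 9 = 9^(k+1) := by
        have h9 : (0:ℝ) < Real.log 9 :=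
          lt_trans one_pos (lt_of_lt_of_le one_lt_log_three (Real.log_le_log (by norm_num) (by norm_num)))
        rw [hCs]
        field_simp
      have hRHS : Cs * 3 * ε / Real.log 9 ≤
          (Cs + 2 * (k+1) * Ck * CM) * y * loglog y ^ ((((k+1:ℕ)):ℝ) - 1) / Real.log y := by
        have hW : (0:ℝ) < loglog y ^ ((((k+1:ℕ)):ℝ) - 1) :=
          Real.rpow_pos_of_pos (loglog_pos y) _
        apply div_le_div₀ ?_ ?_ (by linarith) hL9
        · exact le_of_lt (mul_pos (mul_pos (by positivity) hy0) hW)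
        · have hWnn : 0 ≤ loglog y ^ ((((k+1:ℕ)):ℝ) - 1) := le_trans hε.le hll
          have h2p : (0:ℝ) ≤ 2*(k+1)*Ck*CM := by positivity
          gcongr <;> linarith
      calc ((Tset (k+1) y).card : ℝ) ≤ 9^(k+1) := hcard
        _ = Cs * 3 * ε / Real.log 9 := heq.symm
        _ ≤ _ := hRHS
    · -- large case
      set n := ⌊y⌋₊ with hn
      set P' : Finset ℕ := (Finset.range (n+1)).filter
        (fun p => p.Prime ∧ ((p:ℝ))^(k+1) ≤ y) with hP'
      -- subset into biUnion
      set F : Fin (k+1) × ℕ → Finset (Fin (k+1) → ℕ) :=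
        fun ip => (Tset k (y/ip.2)).image
          (fun s : Fin k → ℕ => (Fin.insertNth ip.1 ip.2 s : Fin (k+1) → ℕ)) with hF
      set U : Finset (Fin (k+1) → ℕ) := (Finset.univ ×ˢ P').biUnion F with hU
      have hsub : Tset (k+1) y ⊆ U := by
        rw [hU]
        intro t ht
        rw [mem_Tset hy0.le] at ht
        obtain ⟨hp, hlt, hle⟩ := ht
        obtain ⟨i, -, hmin⟩ := Finset.exists_min_image Finset.univ t ⟨0, Finset.mem_univ 0⟩
        set p := t i with hpdef
        have hppr : p.Prime := hp i
        have hp0 : (0:ℝ) < p := by exact_mod_cast hppr.pos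
        have hnatpow : p^(k+1) ≤ ∏ i', t i' := by
          calc p^(k+1) = ∏ _i' : Fin (k+1), p := by
                rw [Finset.prod_const, Finset.card_univ, Fintype.card_fin]
            _ ≤ ∏ i', t i' := Finset.prod_le_prod' fun i' _ => hmin i' (Finset.mem_univ i')
        have hpky : ((p:ℝ))^(k+1) ≤ y := by
          calc ((p:ℝ))^(k+1) = ((p^(k+1) : ℕ) : ℝ) := by push_cast; ring
            _ ≤ ((∏ i', t i' : ℕ) : ℝ) := by exact_mod_cast hnatpow
            _ ≤ y := hle
        have hpn : p ≤ n := by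
          apply Nat.le_floor
          calc ((p:ℕ):ℝ) ≤ ((p^(k+1):ℕ):ℝ) := by
                exact_mod_cast Nat.le_self_pow (by omega) p
            _ = ((p:ℝ))^(k+1) := by push_cast; ring
            _ ≤ y := hpky
        have hpmem : p ∈ P' := by
          rw [hP', Finset.mem_filter, Finset.mem_range]
          exact ⟨by omega, hppr, hpky⟩
        set s : Fin k → ℕ := Fin.removeNth i t with hsdef
        have hprodeq : (∏ i', t i' : ℕ) = p * ∏ i', s i' := Fin.prod_univ_succAbove t i
        have hprodeqR : ((∏ i', t i' : ℕ) : ℝ) = (p:ℝ) * ((∏ i', s i' : ℕ) : ℝ) := by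
          rw [hprodeq]; push_cast; ring
        have hsmem : s ∈ Tset k (y/p) := by
          rw [mem_Tset (by positivity)]
          refine ⟨fun i' => hp _, ?_, ?_⟩
          · rw [div_div, div_lt_iff₀ (by positivity)]
            nlinarith [hlt, hprodeqR]
          · rw [le_div_iff₀ hp0]
            nlinarith [hle, hprodeqR]
        apply Finset.mem_biUnion.mpr
        refine ⟨(i, p), Finset.mem_product.mpr ⟨Finset.mem_univ i, hpmem⟩, ?_⟩
        rw [hF]
        apply Finset.mem_image.mpr
        exact ⟨s, hsmem, Fin.insertNth_self_removeNth i t⟩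
      -- cardinality chain (natural numbers)
      have hc1 : (Tset (k+1) y).card ≤ (k+1) * ∑ p ∈ P', (Tset k (y/p)).card := by
        calc (Tset (k+1) y).card
            ≤ U.card := Finset.card_le_card hsub
          _ ≤ ∑ ip ∈ Finset.univ ×ˢ P', (F ip).card := by
              rw [hU]; exact Finset.card_biUnion_le
          _ ≤ ∑ ip ∈ Finset.univ ×ˢ P', (Tset k (y/ip.2)).card := by
              apply Finset.sum_le_sum
              intro ip _
              rw [hF]
              exact Finset.card_image_le
          _ = ∑ _i : Fin (k+1), ∑ p ∈ P', (Tset k (y/p)).card := by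
              rw [Finset.sum_product]
          _ = (k+1) * ∑ p ∈ P', (Tset k (y/p)).card := by
              rw [Finset.sum_const, Finset.card_univ, Fintype.card_fin, smul_eq_mul]
      -- analytic bound per prime
      set L := Real.log y with hL
      set W := loglog y ^ ((k:ℝ) - 1) with hW
      have hWpos' : 0 < W := Real.rpow_pos_of_pos (loglog_pos y) _
      have hL9 : Real.log 9 ≤ L := Real.log_le_log (by norm_num) hy9
      have hlog9 : Real.log 9 = 2 * Real.log 3 := by
        rw [show (9:ℝ) = 3^2 by norm_num, Real.log_pow]; push_cast; ring
      set B := 2 * Ck * y * W / L with hB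
      have hBpos : 0 < B := by
        apply div_pos (by positivity) (by linarith)
      have hperp : ∀ p ∈ P', ((Tset k (y/p)).card : ℝ) ≤ B * (1/p) := by
        intro p hpm
        rw [hP', Finset.mem_filter] at hpm
        obtain ⟨-, hppr, hpky⟩ := hpm
        have hp0 : (0:ℝ) < p := by exact_mod_cast hppr.pos
        have hp2 : (2:ℝ) ≤ p := by exact_mod_cast hppr.two_le
        have hlogp : ((k:ℝ)+1) * Real.log p ≤ L := by
          have h1 := Real.log_le_log (by positivity) hpky
          rw [Real.log_pow] at h1
          rw [hL]
          calc ((k:ℝ)+1) * Real.log p = ((k+1 : ℕ):ℝ) * Real.log p := by push_cast; ring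
            _ ≤ Real.log y := h1
        have hlogpnn : 0 ≤ Real.log p := Real.log_nonneg (by linarith)
        have hk1 : (1:ℝ) ≤ (k:ℝ) := by exact_mod_cast hk
        have hlogp2 : Real.log p ≤ L / 2 := by nlinarith
        have hLppos : L / 2 ≤ Real.log (y/p) := by
          rw [Real.log_div (by linarith) (by linarith)]
          linarith
        have hyp3 : 3 ≤ y / p := by
          have h1 : Real.log 3 ≤ Real.log (y/p) := by linarith [hlog9, hL9, hLppos]
          calc (3:ℝ) = Real.exp (Real.log 3) := (Real.exp_log (by norm_num)).symm
            _ ≤ Real.exp (Real.log (y/p)) := Real.exp_le_exp.mpr h1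
            _ = y / p := Real.exp_log (by positivity)
        have hIHp := hIH (y/p) hyp3
        have hWp : loglog (y/p) ^ ((k:ℝ) - 1) ≤ W := by
          rw [hW]
          apply Real.rpow_le_rpow (loglog_pos _).le ?_ hexpnn
          apply loglog_mono
          calc y / p ≤ y / 1 := by
                apply div_le_div_of_nonneg_left hy0.le one_pos (by linarith)
            _ = y := div_one y
        calc ((Tset k (y/p)).card : ℝ)
            ≤ Ck * (y/p) * loglog (y/p) ^ ((k:ℝ) - 1) / Real.log (y/p) := hIHp
          _ ≤ Ck * (y/p) * W / (L/2) := by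
              apply div_le_div₀ ?_ ?_ (by linarith) hLppos
              · positivity
              · gcongr
          _ = B * (1/p) := by
              rw [hB]
              field_simp
      -- sum up
      have hsum1 : (∑ p ∈ P', ((Tset k (y/p)).card : ℝ)) ≤ B * (CM * loglog y) := by
        calc (∑ p ∈ P', ((Tset k (y/p)).card : ℝ)) ≤ ∑ p ∈ P', B * (1/p) :=
              Finset.sum_le_sum hperp
          _ = B * ∑ p ∈ P', (1/p : ℝ) := by rw [Finset.mul_sum]
          _ ≤ B * (CM * loglog y) := by
              apply mul_le_mul_of_nonneg_left ?_ hBpos.le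
              calc ∑ p ∈ P', (1/p : ℝ)
                  ≤ ∑ p ∈ (Finset.range (n+1)).filter Nat.Prime, (1/p : ℝ) := by
                    apply Finset.sum_le_sum_of_subset_of_nonneg
                    · intro q hq
                      rw [hP', Finset.mem_filter] at hq
                      rw [Finset.mem_filter]
                      exact ⟨hq.1, hq.2.1⟩
                    · intro q _ _; positivity
                _ ≤ CM * loglog y := hM y hy
      have hWW : W * loglog y = loglog y ^ ((((k+1:ℕ)):ℝ) - 1) := by
        calc W * loglog y = loglog y ^ ((k:ℝ)-1) * loglog y ^ (1:ℝ) := by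
              rw [hW, Real.rpow_one]
          _ = loglog y ^ ((k:ℝ) - 1 + 1) := (Real.rpow_add (loglog_pos y) _ _).symm
          _ = loglog y ^ ((((k+1:ℕ)):ℝ) - 1) := by
              congr 1
              push_cast
              ring
      -- final chain
      have hllpos : 0 < loglog y := loglog_pos y
      calc ((Tset (k+1) y).card : ℝ)
          ≤ ((k:ℝ)+1) * ∑ p ∈ P', ((Tset k (y/p)).card : ℝ) := by
            have := hc1
            push_cast
            calc ((Tset (k+1) y).card : ℝ)
                ≤ (((k+1) * ∑ p ∈ P', (Tset k (y/p)).card : ℕ) : ℝ) := by exact_mod_cast hc1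
              _ = ((k:ℝ)+1) * ∑ p ∈ P', ((Tset k (y/p)).card : ℝ) := by push_cast; ring
        _ ≤ ((k:ℝ)+1) * (B * (CM * loglog y)) := by
            apply mul_le_mul_of_nonneg_left hsum1 (by positivity)
        _ = (2 * (k+1) * Ck * CM) * y * (W * loglog y) / L := by
            rw [hB]
            field_simp
        _ = (2 * (k+1) * Ck * CM) * y * loglog y ^ ((((k+1:ℕ)):ℝ) - 1) / L := by rw [hWW]
        _ ≤ (Cs + 2 * (k+1) * Ck * CM) * y * loglog y ^ ((((k+1:ℕ)):ℝ) - 1) / L := by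
            have hXpos : 0 < loglog y ^ ((((k+1:ℕ)):ℝ) - 1) :=
              Real.rpow_pos_of_pos (loglog_pos y) _
            have h0 : 0 ≤ Cs * y * loglog y ^ ((((k+1:ℕ)):ℝ) - 1) / L :=
              le_of_lt (div_pos (mul_pos (mul_pos hCspos hy0) hXpos) (by linarith))
            have h1 : (Cs + 2 * (k+1) * Ck * CM) * y * loglog y ^ ((((k+1:ℕ)):ℝ) - 1) / L
                = 2 * (k+1) * Ck * CM * y * loglog y ^ ((((k+1:ℕ)):ℝ) - 1) / L
                  + Cs * y * loglog y ^ ((((k+1:ℕ)):ℝ) - 1) / L := by ring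
            linarith
        _ = (Cs + 2 * (k+1) * Ck * CM) * y * loglog y ^ ((((k+1:ℕ)):ℝ) - 1) / Real.log y := rfl

theorem stmt_16 (j : ℕ) (hj : 1 ≤ j) :
    ∃ C : ℝ, 0 < C ∧ ∀ y : ℝ, 3 ≤ y →
      (Nat.card {t : Fin j → ℕ // (∀ i, (t i).Prime) ∧
          y / 2 < ((∏ i, t i : ℕ) : ℝ) ∧ ((∏ i, t i : ℕ) : ℝ) ≤ y} : ℝ) ≤
        C * y * loglog y ^ ((j : ℝ) - 1) / Real.log y := by
  obtain ⟨C, hC, h⟩ := key j hj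
  refine ⟨C, hC, fun y hy => ?_⟩
  rw [natcard_eq_Tset j y (by linarith)]
  exact h y hy
end
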